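/- arXiv:0709.0800 — 7 statements merged into one kernel-verified Lean document; each statement's English description precedes it below -/
import Mathlib

section
/- Let G be a finite group of order s²t admitting a Kantor family (F, F*) of order (s,t) with t ≥ 2, and let H be a subgroup of G of order t³ such that |A* ∩ H| ≥ t² for all A* ∈ F* and |A ∩ H| ≥ t for all A ∈ F. Then in fact |A* ∩ H| = t² for every A* ∈ F* and |A ∩ H| = t for every A ∈ F. -/
open scoped Pointwise

/-- A Kantor family of order `(s,t)` for a group `G`:
families `A i` (of order `s`) and `Astar i` (of order `st`), `i : Fin (t+1)`,
with `A i ≤ Astar i`, the tangency condition `A i ⊓ Astar j = ⊥` for `i ≠ j`,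
and the triple condition `A i * A j ∩ A k = 1` for pairwise distinct `i, j, k`. -/
def IsKantorFamily {G : Type*} [Group G] (s t : ℕ)
    (A Astar : Fin (t + 1) → Subgroup G) : Prop :=
  (∀ i, Nat.card (A i) = s) ∧
  (∀ i, Nat.card (Astar i) = s * t) ∧
  (∀ i, A i ≤ Astar i) ∧
  (∀ i j, i ≠ j → A i ⊓ Astar j = ⊥) ∧
  (∀ i j k, i ≠ j → j ≠ k → i ≠ k →
    ∀ g ∈ (A i : Set G) * (A j : Set G), g ∈ A k → g = 1)

/-!
For `j ≠ i` the tangency condition makes `A* i ∩ H` and `A j ∩ H` intersect trivially inside `H`,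
so `|A* i ∩ H| * |A j ∩ H| ≤ |H| = t³`. Together with the lower bounds `t²` and `t`, this product
can only be `t³` if both factors attain their lower bounds.
-/

namespace Subgroup

variable {G : Type*} [Group G]

theorem card_mul_card_le_of_disjoint {H K L : Subgroup G} [Finite H] (hK : K ≤ H) (hL : L ≤ H)
    (hKL : Disjoint K L) : Nat.card K * Nat.card L ≤ Nat.card H := by
  have hcard : Nat.card K * K.relIndex H = Nat.card H := by
    simpa only [relIndex_bot_left] using relIndex_mul_relIndex ⊥ K H bot_le hK
  have hrelIndex_ne_zero : K.relIndex H ≠ 0 :=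
    right_ne_zero_of_mul (hcard ▸ Nat.card_pos.ne')
  calc Nat.card K * Nat.card L = Nat.card K * K.relIndex L := by
        rw [← inf_relIndex_right, hKL.eq_bot, relIndex_bot_left]
    _ ≤ Nat.card K * K.relIndex H :=
        Nat.mul_le_mul_left _ (relIndex_le_of_le_right hL hrelIndex_ne_zero)
    _ = Nat.card H := hcard

theorem card_inf_mul_card_inf_le_of_disjoint {H K L : Subgroup G} [Finite H]
    (hKL : Disjoint K L) : Nat.card ↥(K ⊓ H) * Nat.card ↥(L ⊓ H) ≤ Nat.card H :=
  card_mul_card_le_of_disjoint inf_le_right inf_le_right (hKL.mono inf_le_left inf_le_left)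

end Subgroup

theorem Nat.eq_and_eq_of_mul_le_mul {a b m n : ℕ} (hm : 0 < m) (hn : 0 < n) (hma : m ≤ a)
    (hnb : n ≤ b) (hab : a * b ≤ m * n) : a = m ∧ b = n := by
  refine ⟨le_antisymm ?_ hma, le_antisymm ?_ hnb⟩
  · exact Nat.le_of_mul_le_mul_right ((Nat.mul_le_mul_left a hnb).trans hab) hn
  · exact Nat.le_of_mul_le_mul_left ((Nat.mul_le_mul_right b hma).trans hab) hm

theorem IsKantorFamily.disjoint {G : Type*} [Group G] {s t : ℕ}
    {A Astar : Fin (t + 1) → Subgroup G} (hKF : IsKantorFamily s t A Astar) {i j : Fin (t + 1)}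
    (hij : i ≠ j) : Disjoint (A i) (Astar j) :=
  disjoint_iff.mpr (hKF.2.2.2.1 i j hij)

theorem stmt1_general {G : Type*} [Group G] (s t : ℕ) (ht : 2 ≤ t)
    (A Astar : Fin (t + 1) → Subgroup G) (hKF : IsKantorFamily s t A Astar)
    (H : Subgroup G) (hH : Nat.card H = t ^ 3)
    (h1 : ∀ i, t ^ 2 ≤ Nat.card ↥(Astar i ⊓ H))
    (h2 : ∀ i, t ≤ Nat.card ↥(A i ⊓ H)) :
    (∀ i, Nat.card ↥(Astar i ⊓ H) = t ^ 2) ∧ (∀ i, Nat.card ↥(A i ⊓ H) = t) := by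
  have ht0 : 0 < t := by omega
  have : Finite H := Nat.finite_of_card_ne_zero (by rw [hH]; positivity)
  have : Nontrivial (Fin (t + 1)) := Fin.nontrivial_iff_two_le.mpr (by omega)
  have key : ∀ i j, j ≠ i → Nat.card ↥(Astar i ⊓ H) = t ^ 2 ∧ Nat.card ↥(A j ⊓ H) = t :=
    fun i j hji ↦ Nat.eq_and_eq_of_mul_le_mul (by positivity) ht0 (h1 i) (h2 j) <| by
      rw [← pow_succ, ← hH]
      exact Subgroup.card_inf_mul_card_inf_le_of_disjoint (hKF.disjoint hji).symm
  refine ⟨fun i ↦ ?_, fun i ↦ ?_⟩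
  · obtain ⟨j, hji⟩ := exists_ne i
    exact (key i j hji).1
  · obtain ⟨j, hji⟩ := exists_ne i
    exact (key j i hji.symm).2

theorem stmt1 {G : Type*} [Group G] (s t : ℕ) (ht : 2 ≤ t)
    (hG : Nat.card G = s ^ 2 * t)
    (A Astar : Fin (t + 1) → Subgroup G) (hKF : IsKantorFamily s t A Astar)
    (H : Subgroup G) (hH : Nat.card H = t ^ 3)
    (h1 : ∀ i, t ^ 2 ≤ Nat.card ↥(Astar i ⊓ H))
    (h2 : ∀ i, t ≤ Nat.card ↥(A i ⊓ H)) :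
    (∀ i, Nat.card ↥(Astar i ⊓ H) = t ^ 2) ∧ (∀ i, Nat.card ↥(A i ⊓ H) = t) :=
  stmt1_general s t ht A Astar hKF H hH h1 h2
end

section
/- Let G be a finite group of order s²t admitting a Kantor family (F, F*) of order (s,t), and let H ≤ G with |H| = t³ such that |A* ∩ H| ≥ t² for all A* ∈ F* and |A ∩ H| ≥ t for all A ∈ F. Then the families {A ∩ H : A ∈ F} and {A* ∩ H : A* ∈ F*} form a Kantor family of order (t,t) for H. -/
/-!
For `i ≠ j` the tangency condition `A i ⊓ Astar j = ⊥` gives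
`|A i ∩ H| · |Astar j ∩ H| ≤ |H| = t · t²`, so the lower bounds `t` and `t²` are attained.
With the orders settled, the other axioms of a Kantor family pass to the restrictions to `H`.
-/

open scoped Pointwise

namespace Subgroup

variable {G : Type*} [Group G]

theorem card_subgroupOf (K H : Subgroup G) :
    Nat.card (K.subgroupOf H) = Nat.card ↥(K ⊓ H) := by
  rw [← inf_subgroupOf_right K H]
  exact Nat.card_congr (subgroupOfEquivOfLe inf_le_right).toEquiv

theorem subgroupOf_inf_eq_bot {K L : Subgroup G} (h : K ⊓ L = ⊥) (H : Subgroup G) :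
    K.subgroupOf H ⊓ L.subgroupOf H = ⊥ := by
  change (K ⊓ L).subgroupOf H = ⊥
  rw [h, bot_subgroupOf]

/-- As `C ⊓ D = ⊥`, `D` acts freely on `G ⧸ C`, so `|D| = [D : C ⊓ D] ≤ [G : C]`. -/
theorem card_mul_card_le_of_inf_eq_bot [Finite G] {C D : Subgroup G} (h : C ⊓ D = ⊥) :
    Nat.card C * Nat.card D ≤ Nat.card G := by
  have hD : Nat.card D = C.relIndex D := by
    rw [← inf_relIndex_right, h, relIndex_bot_left]
  calc Nat.card C * Nat.card D = Nat.card C * C.relIndex D := by rw [hD]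
    _ ≤ Nat.card C * C.index := by
      rw [← relIndex_top_right]
      exact Nat.mul_le_mul_left _
        (relIndex_le_of_le_right le_top (by simp [index_ne_zero_of_finite]))
    _ = Nat.card G := card_mul_index C

end Subgroup

theorem Nat.eq_and_eq_of_mul_le_mul_s2 {a b c d : ℕ} (hc : 0 < c) (hd : 0 < d)
    (h : a * b ≤ c * d) (hca : c ≤ a) (hdb : d ≤ b) : a = c ∧ b = d := by
  refine ⟨le_antisymm ?_ hca, le_antisymm ?_ hdb⟩
  · exact Nat.le_of_mul_le_mul_right ((Nat.mul_le_mul_left a hdb).trans h) hd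
  · exact Nat.le_of_mul_le_mul_left ((Nat.mul_le_mul_right b hca).trans h) hc

theorem IsKantorFamily.inf_eq_bot {G : Type*} [Group G] {s t : ℕ}
    {A Astar : Fin (t + 1) → Subgroup G} (hKF : IsKantorFamily s t A Astar) {i j : Fin (t + 1)}
    (hij : i ≠ j) : A i ⊓ Astar j = ⊥ :=
  hKF.2.2.2.1 i j hij

theorem IsKantorFamily.subgroupOf {G : Type*} [Group G] {s t u : ℕ}
    {A Astar : Fin (t + 1) → Subgroup G} (hKF : IsKantorFamily s t A Astar) (H : Subgroup G)
    (hA : ∀ i, Nat.card ↥(A i ⊓ H) = u) (hAstar : ∀ i, Nat.card ↥(Astar i ⊓ H) = u * t) :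
    IsKantorFamily u t (fun i => (A i).subgroupOf H) (fun i => (Astar i).subgroupOf H) := by
  obtain ⟨-, -, hle, htangent, htriple⟩ := hKF
  refine ⟨fun i => (Subgroup.card_subgroupOf _ _).trans (hA i),
    fun i => (Subgroup.card_subgroupOf _ _).trans (hAstar i),
    fun i => Subgroup.comap_mono (hle i),
    fun i j hij => Subgroup.subgroupOf_inf_eq_bot (htangent i j hij) H, ?_⟩
  rintro i j k hij hjk hik g ⟨a, ha, b, hb, rfl⟩ hg
  exact Subtype.ext (htriple i j k hij hjk hik _ ⟨a, ha, b, hb, rfl⟩ hg)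

theorem stmt2_general {G : Type*} [Group G] (s t : ℕ) (ht : 2 ≤ t)
    (A Astar : Fin (t + 1) → Subgroup G) (hKF : IsKantorFamily s t A Astar)
    (H : Subgroup G) (hH : Nat.card H = t ^ 3)
    (h1 : ∀ i, t ^ 2 ≤ Nat.card ↥(Astar i ⊓ H))
    (h2 : ∀ i, t ≤ Nat.card ↥(A i ⊓ H)) :
    IsKantorFamily t t (fun i => (A i).subgroupOf H)
      (fun i => (Astar i).subgroupOf H) := by
  have : Finite H := Nat.finite_of_card_ne_zero (by rw [hH]; positivity)
  have hcard : ∀ i j, i ≠ j → Nat.card ↥(A i ⊓ H) = t ∧ Nat.card ↥(Astar j ⊓ H) = t ^ 2 := by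
    intro i j hij
    refine Nat.eq_and_eq_of_mul_le_mul_s2 (by omega) (by positivity) ?_ (h2 i) (h1 j)
    have hbound := Subgroup.card_mul_card_le_of_inf_eq_bot
      (Subgroup.subgroupOf_inf_eq_bot (hKF.inf_eq_bot hij) H)
    rwa [Subgroup.card_subgroupOf, Subgroup.card_subgroupOf, hH, pow_succ'] at hbound
  have hne : ∀ i : Fin (t + 1), ∃ j, j ≠ i :=
    have : Nontrivial (Fin (t + 1)) := Fin.nontrivial_iff_two_le.mpr (by omega)
    exists_ne
  refine hKF.subgroupOf H (fun i => ?_) (fun i => ?_)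
  · obtain ⟨j, hj⟩ := hne i
    exact (hcard i j hj.symm).1
  · obtain ⟨j, hj⟩ := hne i
    rw [← sq]
    exact (hcard j i hj).2

theorem stmt2 {G : Type*} [Group G] (s t : ℕ) (ht : 2 ≤ t)
    (hG : Nat.card G = s ^ 2 * t)
    (A Astar : Fin (t + 1) → Subgroup G) (hKF : IsKantorFamily s t A Astar)
    (H : Subgroup G) (hH : Nat.card H = t ^ 3)
    (h1 : ∀ i, t ^ 2 ≤ Nat.card ↥(Astar i ⊓ H))
    (h2 : ∀ i, t ≤ Nat.card ↥(A i ⊓ H)) :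
    IsKantorFamily t t (fun i => (A i).subgroupOf H)
      (fun i => (Astar i).subgroupOf H) :=
  stmt2_general s t ht A Astar hKF H hH h1 h2
end

section
/- Let G be a finite group of order p⁵ (p prime) admitting a Kantor family (F, F*) of order (p², p), and suppose the Frattini subgroup Φ(G) has order p. Then every member of F ∪ F* is elementary abelian. Moreover, if p is odd, then G has exponent p. -/
/-!
Since `G` is a `p`-group, `Φ(G)` contains all `p`-th powers and commutators, and having order `p`
it is central of exponent `p`. If `Φ(G) ≤ Aₖ`, then for `i, j, k` distinct the subgroup
`Φ(G)Aᵢ` (of order `p³`) is a complement of `Aⱼ`, and the triple condition forces `Aₖ ≤ Φ(G)`,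
which is absurd; so `Φ(G) ∩ Aₖ = 1` and `Aₖ` embeds in the elementary abelian group `G/Φ(G)`.
Each `Aₖ*` either meets `Φ(G)` trivially or equals `AₖΦ(G)`; either way it is elementary abelian.
Finally `G = AᵢAⱼ*`, and for `p` odd the identity `(ab)ᵖ = aᵖbᵖ[b⁻¹,a⁻¹]^(p choose 2)`, valid
when commutators are central, gives exponent `p`.
-/

open scoped Pointwise

open Subgroup
open scoped commutatorElement

section

variable {G : Type*} [Group G]

theorem mem_frattini_iff {x : G} : x ∈ frattini G ↔ ∀ M : Subgroup G, IsCoatom M → x ∈ M := by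
  simp [frattini, Order.radical, mem_iInf]

namespace IsPGroup

variable {p : ℕ} [Fact p.Prime] [Finite G]

theorem index_eq_of_isCoatom (hG : IsPGroup p G) {M : Subgroup G} (hM : IsCoatom M) :
    M.index = p := by
  obtain ⟨n, hn⟩ := (hG.to_subgroup M).exists_card_eq
  obtain ⟨k, hk⟩ := hG.index M
  have hk0 : k ≠ 0 := by
    rintro rfl
    exact hM.1 (index_eq_one.mp (by rwa [pow_zero] at hk))
  have hdvd : p ^ (n + 1) ∣ Nat.card G := by
    rw [← M.card_mul_index, hn, hk, pow_succ]
    exact mul_dvd_mul_left _ (dvd_pow_self p hk0)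
  obtain ⟨K, hK, hMK⟩ := Sylow.exists_subgroup_card_pow_succ hdvd hn
  have hMK' : M ≠ K := by
    rintro rfl
    exact (Nat.pow_lt_pow_succ (Fact.out : p.Prime).one_lt).ne (hn.symm.trans hK)
  rw [hM.2 K (hMK.lt_of_ne hMK'), card_top, ← M.card_mul_index, hn, pow_succ] at hK
  exact Nat.eq_of_mul_eq_mul_left (pow_pos (Fact.out : p.Prime).pos n) hK

theorem normal_of_isCoatom (hG : IsPGroup p G) {M : Subgroup G} (hM : IsCoatom M) : M.Normal :=
  haveI := hG.isNilpotent
  NormalizerCondition.normal_of_coatom M Group.normalizerCondition_of_isNilpotent hM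

theorem pow_mem_frattini (hG : IsPGroup p G) (g : G) : g ^ p ∈ frattini G := by
  refine mem_frattini_iff.mpr fun M hM => ?_
  have := hG.normal_of_isCoatom hM
  simpa [hG.index_eq_of_isCoatom hM] using M.pow_index_mem g

theorem commutatorElement_mem_frattini (hG : IsPGroup p G) (x y : G) : ⁅x, y⁆ ∈ frattini G := by
  refine mem_frattini_iff.mpr fun M hM => ?_
  have := hG.normal_of_isCoatom hM
  have : IsCyclic (G ⧸ M) := isCyclic_of_prime_card (hG.index_eq_of_isCoatom hM)
  rw [← QuotientGroup.eq_one_iff, ← QuotientGroup.mk'_apply, map_commutatorElement,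
    commutatorElement_eq_one_iff_mul_comm]
  exact mul_comm' _ _

/-- `G` acts on `N` through `Aut(N)`, of order `p - 1`, which is prime to the order of `g`. -/
theorem le_center_of_card_eq (hG : IsPGroup p G) (N : Subgroup G) [N.Normal]
    (hN : Nat.card N = p) : N ≤ center G := by
  have : IsCyclic N := isCyclic_of_prime_card hN
  intro n hn
  refine mem_center_iff.mpr fun g => ?_
  have hg : MulAut.conjNormal (H := N) g = 1 := by
    obtain ⟨k, hk⟩ := hG g
    refine orderOf_eq_one_iff.mp (Nat.eq_one_of_dvd_coprimes ?_
      ((orderOf_map_dvd _ g).trans (orderOf_dvd_of_pow_eq_one hk)) (orderOf_dvd_natCard _))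
    rw [IsCyclic.card_mulAut, hN, Nat.totient_prime Fact.out]
    exact Nat.Coprime.pow_left k
      ((Nat.coprime_self_sub_right (Fact.out : p.Prime).one_le).mpr (Nat.coprime_one_right p))
  simpa [MulAut.conjNormal_apply, mul_inv_eq_iff_eq_mul] using
    congrArg Subtype.val (DFunLike.congr_fun hg ⟨n, hn⟩)

end IsPGroup

namespace Subgroup

theorem disjoint_or_le_of_card_eq_prime {p : ℕ} (hp : p.Prime) {N : Subgroup G}
    (hN : Nat.card N = p) (H : Subgroup G) : Disjoint N H ∨ N ≤ H := by
  have hdvd := card_dvd_of_le (inf_le_left : N ⊓ H ≤ N)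
  rw [hN, Nat.dvd_prime hp, card_eq_one, ← disjoint_iff] at hdvd
  refine hdvd.imp_right fun h => ?_
  have : Finite N := Nat.finite_of_card_ne_zero (hN ▸ hp.ne_zero)
  exact eq_of_le_of_card_ge inf_le_left (hN.trans h.symm).le ▸ inf_le_right

theorem card_mul_card_le_card_sup [Finite G] {H K : Subgroup G} (h : Disjoint H K) :
    Nat.card H * Nat.card K ≤ Nat.card ↥(H ⊔ K) := by
  rw [← Nat.card_prod]
  exact Nat.card_le_card_of_injective (fun x => ⟨x.1 * x.2, mul_mem_sup x.1.2 x.2.2⟩)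
    fun x y hxy => mul_injective_of_disjoint h (congrArg Subtype.val hxy)

def IsElementaryAbelian (p : ℕ) (H : Subgroup G) : Prop :=
  IsMulCommutative H ∧ ∀ g ∈ H, g ^ p = 1

theorem isElementaryAbelian_of_card_eq_prime {p : ℕ} (hp : p.Prime) {N : Subgroup G}
    (hN : Nat.card N = p) : N.IsElementaryAbelian p :=
  have : Fact p.Prime := ⟨hp⟩
  have : IsCyclic N := isCyclic_of_prime_card hN
  ⟨inferInstance, fun _ hg => orderOf_dvd_iff_pow_eq_one.mp (hN ▸ N.orderOf_dvd_natCard hg)⟩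

theorem isElementaryAbelian_of_disjoint_frattini {p : ℕ} [Fact p.Prime] [Finite G]
    (hG : IsPGroup p G) {H : Subgroup G} (h : Disjoint (frattini G) H) :
    H.IsElementaryAbelian p := by
  refine ⟨IsMulCommutative.of_setLike_mul_comm fun a ha b hb => ?_, fun g hg => ?_⟩
  · refine commutatorElement_eq_one_iff_mul_comm.mp
      (disjoint_def.mp h (hG.commutatorElement_mem_frattini a b) ?_)
    rw [commutatorElement_def]
    exact mul_mem (mul_mem (mul_mem ha hb) (inv_mem ha)) (inv_mem hb)
  · exact disjoint_def.mp h (hG.pow_mem_frattini g) (pow_mem hg p)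

theorem IsElementaryAbelian.sup_of_le_center {p : ℕ} {H N : Subgroup G}
    (hH : H.IsElementaryAbelian p) (hN : N.IsElementaryAbelian p) (hNc : N ≤ center G) :
    (H ⊔ N).IsElementaryAbelian p := by
  have hcomm : ∀ n ∈ N, ∀ g, Commute n g := fun n hn g => (mem_center_iff.mp (hNc hn) g).symm
  have : N.Normal := ⟨fun n hn g => by rwa [← (hcomm n hn g).eq, mul_inv_cancel_right]⟩
  have hmem : ∀ {x}, x ∈ H ⊔ N → ∃ h ∈ H, ∃ n ∈ N, h * n = x := fun hx => by
    rwa [← SetLike.mem_coe, mul_normal] at hx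
  refine ⟨IsMulCommutative.of_setLike_mul_comm fun x hx y hy => ?_, fun x hx => ?_⟩
  · obtain ⟨h₁, hh₁, n₁, hn₁, rfl⟩ := hmem hx
    obtain ⟨h₂, hh₂, n₂, hn₂, rfl⟩ := hmem hy
    have : IsMulCommutative H := hH.1
    have : Commute h₁ h₂ := setLike_mul_comm hh₁ hh₂
    exact ((this.mul_right (hcomm n₂ hn₂ h₁).symm).mul_left (hcomm n₁ hn₁ _)).eq
  · obtain ⟨h, hh, n, hn, rfl⟩ := hmem hx
    rw [(hcomm n hn h).symm.mul_pow, hH.2 h hh, hN.2 n hn, one_mul]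

end Subgroup

theorem pow_mul_eq_mul_pow_mul_pow {a b c : G} (hba : b * a = a * b * c) (hbc : Commute b c)
    (n : ℕ) : b ^ n * a = a * b ^ n * c ^ n := by
  induction n with
  | zero => simp
  | succ n ih =>
    rw [pow_succ', mul_assoc, ih, ← mul_assoc, ← mul_assoc, hba, pow_succ']
    simp only [mul_assoc, (hbc.pow_left n).symm.left_comm]

theorem mul_pow_of_mul_eq_mul_mul {a b c : G} (hba : b * a = a * b * c) (hac : Commute a c)
    (hbc : Commute b c) (n : ℕ) : (a * b) ^ n = a ^ n * b ^ n * c ^ n.choose 2 := by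
  induction n with
  | zero => simp
  | succ n ih =>
    have hchoose : (n + 1).choose 2 = n + n.choose 2 := by
      rw [Nat.choose_succ_succ', Nat.choose_one_right]
    rw [pow_succ, ih, hchoose, pow_add c, pow_succ a, pow_succ b]
    simp only [mul_assoc, (hac.pow_right (n.choose 2)).symm.left_comm,
      (hbc.pow_right (n.choose 2)).symm.eq]
    rw [← mul_assoc (b ^ n) a, pow_mul_eq_mul_pow_mul_pow hba hbc]
    simp only [mul_assoc, (hbc.pow_right n).symm.left_comm]

theorem mul_pow_prime_of_mul_eq_mul_mul {p : ℕ} (hp : p.Prime) (hodd : Odd p) {a b c : G}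
    (hba : b * a = a * b * c) (hac : Commute a c) (hbc : Commute b c) (hc : c ^ p = 1) :
    (a * b) ^ p = a ^ p * b ^ p := by
  obtain ⟨m, hm⟩ := hp.dvd_choose_self two_ne_zero (hp.odd_iff.mp hodd)
  rw [mul_pow_of_mul_eq_mul_mul hba hac hbc, hm, pow_mul, hc, one_pow, mul_one]

theorem IsPGroup.mul_pow_of_frattini_le_center {p : ℕ} [Fact p.Prime] [Finite G]
    (hG : IsPGroup p G) (hodd : Odd p) (hcen : frattini G ≤ center G)
    (hΦ : ∀ w ∈ frattini G, w ^ p = 1) (a b : G) : (a * b) ^ p = a ^ p * b ^ p := by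
  have hc := hG.commutatorElement_mem_frattini b⁻¹ a⁻¹
  exact mul_pow_prime_of_mul_eq_mul_mul Fact.out hodd (by rw [commutatorElement_def]; group)
    (mem_center_iff.mp (hcen hc) a) (mem_center_iff.mp (hcen hc) b) (hΦ _ hc)

namespace IsKantorFamily

variable {s t : ℕ} {A Astar : Fin (t + 1) → Subgroup G}

theorem disjoint_star (hKF : IsKantorFamily s t A Astar) {i j : Fin (t + 1)} (hij : i ≠ j) :
    Disjoint (A i) (Astar j) :=
  disjoint_iff.mpr (hKF.2.2.2.1 i j hij)

theorem disjoint_s5 (hKF : IsKantorFamily s t A Astar) {i j : Fin (t + 1)} (hij : i ≠ j) :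
    Disjoint (A i) (A j) :=
  (hKF.disjoint_star hij).mono_right (hKF.2.2.1 j)

theorem isComplement' [Finite G] (hKF : IsKantorFamily s t A Astar)
    (hG : Nat.card G = s ^ 2 * t) {i j : Fin (t + 1)} (hij : i ≠ j) :
    IsComplement' (A i) (Astar j) :=
  isComplement'_of_card_mul_and_disjoint (by rw [hKF.1 i, hKF.2.1 j, hG]; ring)
    (hKF.disjoint_star hij)

theorem le_of_normal_le [Finite G] (hKF : IsKantorFamily s t A Astar)
    (hG : Nat.card G = s ^ 2 * t) (ht : 2 ≤ t) (N : Subgroup G) [N.Normal]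
    (hN : Nat.card N = t) {k : Fin (t + 1)} (hNk : N ≤ A k) : A k ≤ N := by
  obtain ⟨i, hik, -⟩ := Fin.exists_ne_and_ne_of_two_lt k k (by omega)
  obtain ⟨j, hji, hjk⟩ := Fin.exists_ne_and_ne_of_two_lt i k (by omega)
  have htriple := hKF.2.2.2.2
  have hmem : ∀ {x}, x ∈ N ⊔ A i → ∃ w ∈ N, ∃ a ∈ A i, w * a = x := fun hx => by
    rwa [← SetLike.mem_coe, normal_mul] at hx
  have hdisj : Disjoint (N ⊔ A i) (A j) := by
    refine disjoint_def.mpr fun {x} hx hxj => ?_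
    obtain ⟨w, hw, a, ha, rfl⟩ := hmem hx
    obtain rfl : w = 1 := htriple j i k hji hik hjk w
      ⟨w * a, hxj, a⁻¹, inv_mem ha, mul_inv_cancel_right w a⟩ (hNk hw)
    rw [one_mul] at hxj ⊢
    exact disjoint_def.mp (hKF.disjoint_s5 hji.symm) ha hxj
  have hcard : Nat.card G ≤ Nat.card ↥(N ⊔ A i) * Nat.card (A j) := by
    calc Nat.card G = Nat.card N * Nat.card (A i) * Nat.card (A j) := by
          rw [hG, hN, hKF.1 i, hKF.1 j]; ring
      _ ≤ _ := Nat.mul_le_mul_right _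
          (card_mul_card_le_card_sup ((hKF.disjoint_s5 hik.symm).mono_left hNk))
  have hsurj := ((mul_injective_of_disjoint hdisj).bijective_of_nat_card_le
    (by rwa [Nat.card_prod])).2
  intro g hg
  obtain ⟨⟨⟨x, hx⟩, ⟨b, hb⟩⟩, rfl⟩ := hsurj g
  obtain ⟨w, hw, a, ha, rfl⟩ := hmem hx
  have : a * b = 1 := htriple i j k hji.symm hjk hik _ (Set.mul_mem_mul ha hb) (by
    rw [show a * b = w⁻¹ * (w * a * b) by group]; exact mul_mem (inv_mem (hNk hw)) hg)
  simpa [mul_assoc, this] using hw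

theorem disjoint_of_card_eq_prime [Finite G] (hKF : IsKantorFamily s t A Astar)
    (hG : Nat.card G = s ^ 2 * t) (ht : t.Prime) (hts : t < s) (N : Subgroup G) [N.Normal]
    (hN : Nat.card N = t) (k : Fin (t + 1)) : Disjoint N (A k) :=
  (disjoint_or_le_of_card_eq_prime ht hN (A k)).resolve_right fun hNk =>
    (card_le_of_le (hKF.le_of_normal_le hG ht.two_le N hN hNk)).not_gt (hN ▸ hKF.1 k ▸ hts)

theorem sup_eq_star [Finite G] (hKF : IsKantorFamily s t A Astar) {N : Subgroup G}
    (hN : Nat.card N = t) {k : Fin (t + 1)} (hdisj : Disjoint (A k) N) (hNk : N ≤ Astar k) :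
    A k ⊔ N = Astar k :=
  eq_of_le_of_card_ge (sup_le (hKF.2.2.1 k) hNk)
    (by rw [hKF.2.1 k, ← hKF.1 k, ← hN]; exact card_mul_card_le_card_sup hdisj)

end IsKantorFamily

end

theorem stmt5 {G : Type*} [Group G] (p : ℕ) (hp : p.Prime)
    (hG : Nat.card G = p ^ 5)
    (A Astar : Fin (p + 1) → Subgroup G)
    (hKF : IsKantorFamily (p ^ 2) p A Astar)
    (hPhi : Nat.card (frattini G) = p) :
    (∀ i, IsMulCommutative (A i) ∧ ∀ g ∈ A i, g ^ p = 1) ∧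
    (∀ i, IsMulCommutative (Astar i) ∧ ∀ g ∈ Astar i, g ^ p = 1) ∧
    (Odd p → ∀ g : G, g ^ p = 1) := by
  have : Fact p.Prime := ⟨hp⟩
  have : Finite G := Nat.finite_of_card_ne_zero (by simp [hG, hp.ne_zero])
  have hPG : IsPGroup p G := IsPGroup.of_card hG
  have hG' : Nat.card G = (p ^ 2) ^ 2 * p := by rw [hG]; ring
  have hcen := hPG.le_center_of_card_eq (frattini G) hPhi
  have hΦ := isElementaryAbelian_of_card_eq_prime hp hPhi
  have hdisj := hKF.disjoint_of_card_eq_prime hG' hp (by nlinarith [hp.two_le]) _ hPhi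
  have hA k : (A k).IsElementaryAbelian p := isElementaryAbelian_of_disjoint_frattini hPG (hdisj k)
  have hAstar k : (Astar k).IsElementaryAbelian p := by
    rcases disjoint_or_le_of_card_eq_prime hp hPhi (Astar k) with hd | hle
    · exact isElementaryAbelian_of_disjoint_frattini hPG hd
    · rw [← hKF.sup_eq_star hPhi (hdisj k).symm hle]
      exact (hA k).sup_of_le_center hΦ hcen
  refine ⟨hA, hAstar, fun hodd g => ?_⟩
  obtain ⟨⟨⟨a, ha⟩, ⟨b, hb⟩⟩, rfl⟩ := (hKF.isComplement' hG' (i := 0) (j := 1) (by simp)).2 g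
  rw [hPG.mul_pow_of_frattini_le_center hodd hcen hΦ.2, (hA 0).2 a ha, (hAstar 1).2 b hb, one_mul]
end

section
/- Let p be an odd prime and let G be an extraspecial group of order p⁵ admitting a Kantor family of order (p², p). Then G has exponent p and all members of the Kantor family are elementary abelian. -/
open scoped Pointwise

/-- A finite `p`-group `G` is extraspecial if its centre, derived subgroup and
Frattini subgroup coincide and have order `p`. -/
def IsExtraspecial (p : ℕ) (G : Type*) [Group G] : Prop :=
  Subgroup.center G = commutator G ∧ Subgroup.center G = frattini G ∧
    Nat.card (Subgroup.center G) = p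

/-!
As `G' = Z(G)` has odd prime order `p`, the map `x ↦ x ^ p` is a homomorphism into `Z(G)`.
Each `A*ⱼ` contains `Z(G)`: otherwise `A*ⱼ` meets `G'` trivially, so it is abelian, and
`A*ⱼ Z(G)` is an abelian subgroup of index `p`; in a group of class two such a subgroup has
order at most `|Z(G)|²`. Tangency then gives `Aᵢ ∩ Z(G) = 1`, so `Aᵢ` has exponent `p` and
`A*ᵢ = Aᵢ Z(G)` is abelian of exponent `p`. Finally `G = Aᵢ A*ⱼ` for `i ≠ j` by counting.
-/

open Subgroup
open scoped commutatorElement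

namespace Subgroup

variable {G : Type*} [Group G]

theorem card_sup_of_inf_eq_bot (H N : Subgroup G) [N.Normal] (h : H ⊓ N = ⊥) :
    Nat.card ↥(H ⊔ N) = Nat.card H * Nat.card N := by
  rw [← relIndex_bot_left (H ⊔ N), ← relIndex_mul_relIndex ⊥ N _ bot_le le_sup_right,
    relIndex_sup_right, relIndex_bot_left, ← inf_relIndex_left H N, h, relIndex_bot_left,
    mul_comm]

theorem inf_eq_bot_or_le_of_card_prime {H : Subgroup G} (hH : (Nat.card H).Prime)
    (K : Subgroup G) : H ⊓ K = ⊥ ∨ H ≤ K := by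
  have : Finite H := Nat.finite_of_card_ne_zero hH.ne_zero
  exact (hH.eq_one_or_self_of_dvd _ (card_dvd_of_le inf_le_left)).imp card_eq_one.mp
    fun h => inf_eq_left.mp (eq_of_le_of_card_ge inf_le_left h.ge)

theorem eq_top_of_lt_of_index_prime {H K : Subgroup G} (hHK : H < K) (hH : H.index.Prime) :
    K = ⊤ := by
  rw [← relIndex_mul_index hHK.le, Nat.prime_mul_iff] at hH
  rcases hH with ⟨-, h⟩ | ⟨-, h⟩
  · exact index_eq_one.mp h
  · exact absurd (relIndex_eq_one.mp h) hHK.not_ge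

theorem inf_centralizer_le_center_of_index_prime {H : Subgroup G} [IsMulCommutative H]
    (hH : H.index.Prime) {g : G} (hg : g ∉ H) : H ⊓ centralizer {g} ≤ center G := by
  rintro x ⟨hxH, hxg⟩
  have hle : H ≤ centralizer {x} :=
    (le_centralizer H).trans (centralizer_le (Set.singleton_subset_iff.mpr hxH))
  have hgx : g ∈ centralizer {x} :=
    mem_centralizer_singleton_iff.mpr (mem_centralizer_singleton_iff.mp hxg).symm
  have hlt : H < centralizer {x} := SetLike.lt_iff_le_and_exists.mpr ⟨hle, g, hgx, hg⟩
  exact centralizer_eq_top_iff_subset.mp (eq_top_of_lt_of_index_prime hlt hH) rfl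

theorem isMulCommutative_sup_center (H : Subgroup G) [IsMulCommutative H] :
    IsMulCommutative ↥(H ⊔ center G) := by
  rw [← le_centralizer_iff_isMulCommutative]
  refine sup_le ?_ (center_le_centralizer _)
  exact le_centralizer_iff.mp (sup_le (le_centralizer H) (center_le_centralizer _))

end Subgroup

theorem pow_eq_one_of_mem_sup {G : Type*} [Group G] {n : ℕ}
    (hmul : ∀ x y : G, (x * y) ^ n = x ^ n * y ^ n) {H K : Subgroup G}
    (hH : ∀ h ∈ H, h ^ n = 1) (hK : ∀ k ∈ K, k ^ n = 1) : ∀ g ∈ H ⊔ K, g ^ n = 1 := by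
  let powHom : G →* G := MonoidHom.mk' (· ^ n) hmul
  have hle : H ⊔ K ≤ powHom.ker :=
    sup_le (fun h hh => powHom.mem_ker.mpr (hH h hh)) (fun k hk => powHom.mem_ker.mpr (hK k hk))
  exact fun g hg => powHom.mem_ker.mp (hle hg)

section ClassTwo

variable {G : Type*} [Group G]

theorem commutatorElement_mem_center (hG : commutator G ≤ center G) (x y : G) :
    ⁅x, y⁆ ∈ center G :=
  hG (commutator_mem_commutator (mem_top x) (mem_top y))

theorem commutatorElement_pow_left (hG : commutator G ≤ center G) (x y : G) (n : ℕ) :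
    ⁅x ^ n, y⁆ = ⁅x, y⁆ ^ n := by
  induction n with
  | zero => simp
  | succ n ih =>
    have hc := pow_mem (commutatorElement_mem_center hG x y) n
    rw [pow_succ', commutatorElement_mul_left_eq_conj_mul, ih, mem_center_iff.mp hc x,
      mul_inv_cancel_right, pow_succ]

theorem mul_pow_of_commutator_le_center (hG : commutator G ≤ center G) (x y : G) (n : ℕ) :
    (x * y) ^ n = ⁅y, x⁆ ^ n.choose 2 * x ^ n * y ^ n := by
  induction n with
  | zero => simp
  | succ n ih =>
    have hyx : y ^ n * x = ⁅y, x⁆ ^ n * x * y ^ n := by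
      rw [← commutatorElement_pow_left hG, commutatorElement_def]; group
    have hc := mem_center_iff.mp (pow_mem (commutatorElement_mem_center hG y x) n) (x ^ n)
    calc (x * y) ^ (n + 1) = ⁅y, x⁆ ^ n.choose 2 * x ^ n * (y ^ n * x) * y := by
          rw [pow_succ, ih]; group
      _ = ⁅y, x⁆ ^ n.choose 2 * (x ^ n * ⁅y, x⁆ ^ n) * x * y ^ n * y := by rw [hyx]; group
      _ = ⁅y, x⁆ ^ (n.choose 2 + n) * x ^ (n + 1) * y ^ (n + 1) := by rw [hc]; group
      _ = ⁅y, x⁆ ^ (n + 1).choose 2 * x ^ (n + 1) * y ^ (n + 1) := by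
          rw [Nat.choose_succ_succ', Nat.choose_one_right, add_comm]

theorem pow_mem_center_of_commutatorElement_pow_eq_one (hG : commutator G ≤ center G) {n : ℕ}
    (hn : ∀ x y : G, ⁅x, y⁆ ^ n = 1) (x : G) : x ^ n ∈ center G :=
  mem_center_iff.mpr fun y => (commutatorElement_eq_one_iff_mul_comm.mp
    (by rw [commutatorElement_pow_left hG, hn])).symm

theorem mul_pow_of_odd (hG : commutator G ≤ center G) {n : ℕ} (hodd : Odd n)
    (hn : ∀ x y : G, ⁅x, y⁆ ^ n = 1) (x y : G) : (x * y) ^ n = x ^ n * y ^ n := by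
  obtain ⟨k, rfl⟩ := hodd
  have hchoose : (2 * k + 1).choose 2 = (2 * k + 1) * k := by
    rw [Nat.choose_two_right, Nat.add_sub_cancel, mul_left_comm,
      Nat.mul_div_cancel_left _ two_pos]
  rw [mul_pow_of_commutator_le_center hG, hchoose, pow_mul, hn, one_pow, one_mul]

def commutatorElementHom (hG : commutator G ≤ center G) (g : G) : G →* center G where
  toFun h := ⟨⁅g, h⁆, commutatorElement_mem_center hG g h⟩
  map_one' := Subtype.ext (commutatorElement_one_right g)
  map_mul' a b := Subtype.ext <| show ⁅g, a * b⁆ = ⁅g, a⁆ * ⁅g, b⁆ by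
    rw [commutatorElement_mul_right_eq_mul_conj, mul_assoc _ a,
      mem_center_iff.mp (commutatorElement_mem_center hG g b) a, ← mul_assoc,
      mul_inv_cancel_right]

theorem card_le_card_center_sq_of_index_prime [Finite G] (hG : commutator G ≤ center G)
    (H : Subgroup G) [IsMulCommutative H] (hH : H.index.Prime) :
    Nat.card H ≤ Nat.card (center G) ^ 2 := by
  obtain ⟨g, hg⟩ : ∃ g, g ∉ H := by
    by_contra! h
    exact hH.ne_one (index_eq_one.mpr ((eq_top_iff' H).mpr h))
  set f := commutatorElementHom hG g
  have hker : f.ker ⊓ H ≤ center G := fun x ⟨hx, hxH⟩ =>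
    inf_centralizer_le_center_of_index_prime hH hg ⟨hxH, mem_centralizer_singleton_iff.mpr
      (commutatorElement_eq_one_iff_mul_comm.mp (congrArg Subtype.val hx)).symm⟩
  calc Nat.card H = Nat.card ↥(f.ker ⊓ H) * f.ker.relIndex H := by
        rw [← relIndex_bot_left H, ← relIndex_mul_relIndex ⊥ _ H bot_le inf_le_right,
          relIndex_bot_left, inf_relIndex_right]
    _ = Nat.card ↥(f.ker ⊓ H) * Nat.card (H.map f) := by rw [relIndex_ker]
    _ ≤ Nat.card (center G) * Nat.card (center G) :=
        Nat.mul_le_mul (card_le_of_le hker) (card_le_card_group _)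
    _ = Nat.card (center G) ^ 2 := (sq _).symm

end ClassTwo

namespace IsExtraspecial

variable {p : ℕ} {G : Type*} [Group G]

theorem commutator_le_center (hes : IsExtraspecial p G) : commutator G ≤ center G :=
  hes.1.ge

theorem pow_eq_one_of_mem_center (hes : IsExtraspecial p G) {z : G} (hz : z ∈ center G) :
    z ^ p = 1 := by
  simpa [hes.2.2] using congrArg Subtype.val (pow_card_eq_one' (x := (⟨z, hz⟩ : center G)))

theorem commutatorElement_pow_eq_one (hes : IsExtraspecial p G) (x y : G) : ⁅x, y⁆ ^ p = 1 :=
  hes.pow_eq_one_of_mem_center (commutatorElement_mem_center hes.commutator_le_center x y)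

theorem not_isMulCommutative_of_card_eq_pow_four [Finite G] (hes : IsExtraspecial p G)
    (hp : p.Prime) (hG : Nat.card G = p ^ 5) {H : Subgroup G} (hH : Nat.card H = p ^ 4) :
    ¬IsMulCommutative H := by
  intro
  have hindex : H.index = p := by
    have := H.card_mul_index
    rw [hH, hG, pow_succ] at this
    exact Nat.eq_of_mul_eq_mul_left (pow_pos hp.pos 4) this
  have := card_le_card_center_sq_of_index_prime hes.commutator_le_center H (hindex ▸ hp)
  rw [hH, hes.2.2] at this
  exact absurd this (not_le.mpr (Nat.pow_lt_pow_right hp.one_lt (by norm_num)))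

end IsExtraspecial

namespace IsKantorFamily

variable {G : Type*} [Group G] [Finite G] {p : ℕ} {A Astar : Fin (p + 1) → Subgroup G}

theorem center_le (hKF : IsKantorFamily (p ^ 2) p A Astar) (hp : p.Prime)
    (hG : Nat.card G = p ^ 5) (hes : IsExtraspecial p G) (j : Fin (p + 1)) :
    center G ≤ Astar j := by
  refine (inf_eq_bot_or_le_of_card_prime (hes.2.2 ▸ hp) (Astar j)).resolve_left fun h => ?_
  have : IsMulCommutative (Astar j) := by
    rw [← le_centralizer_iff_isMulCommutative, ← commutator_eq_bot_iff_le_centralizer,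
      eq_bot_iff, ← h]
    exact le_inf ((commutator_mono le_top le_top).trans hes.commutator_le_center)
      (commutator_le_self _)
  refine hes.not_isMulCommutative_of_card_eq_pow_four hp hG (H := Astar j ⊔ center G) ?_
    (isMulCommutative_sup_center _)
  rw [card_sup_of_inf_eq_bot _ _ (inf_comm (center G) _ ▸ h), hKF.2.1 j, hes.2.2]
  ring

theorem inf_center_eq_bot (hKF : IsKantorFamily (p ^ 2) p A Astar) (hp : p.Prime)
    (hG : Nat.card G = p ^ 5) (hes : IsExtraspecial p G) (i : Fin (p + 1)) :
    A i ⊓ center G = ⊥ := by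
  have : Nontrivial (Fin (p + 1)) := Fin.nontrivial_iff_two_le.mpr (by linarith [hp.two_le])
  obtain ⟨j, hj⟩ := exists_ne i
  exact eq_bot_iff.mpr ((inf_le_inf_left _ (hKF.center_le hp hG hes j)).trans
    (hKF.2.2.2.1 i j hj.symm).le)

theorem pow_eq_one_of_mem (hKF : IsKantorFamily (p ^ 2) p A Astar) (hp : p.Prime)
    (hG : Nat.card G = p ^ 5) (hes : IsExtraspecial p G) (i : Fin (p + 1)) {a : G}
    (ha : a ∈ A i) : a ^ p = 1 := by
  have hcen := pow_mem_center_of_commutatorElement_pow_eq_one hes.commutator_le_center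
    hes.commutatorElement_pow_eq_one a
  simpa [hKF.inf_center_eq_bot hp hG hes i] using mem_inf.mpr ⟨pow_mem ha p, hcen⟩

theorem sup_center_eq (hKF : IsKantorFamily (p ^ 2) p A Astar) (hp : p.Prime)
    (hG : Nat.card G = p ^ 5) (hes : IsExtraspecial p G) (i : Fin (p + 1)) :
    A i ⊔ center G = Astar i := by
  refine eq_of_le_of_card_ge (sup_le (hKF.2.2.1 i) (hKF.center_le hp hG hes i)) ?_
  rw [card_sup_of_inf_eq_bot _ _ (hKF.inf_center_eq_bot hp hG hes i), hKF.1 i, hKF.2.1 i,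
    hes.2.2]

theorem sup_eq_top (hKF : IsKantorFamily (p ^ 2) p A Astar) (hp : p.Prime)
    (hG : Nat.card G = p ^ 5) (hes : IsExtraspecial p G) {i j : Fin (p + 1)} (hij : i ≠ j) :
    A i ⊔ Astar j = ⊤ := by
  have : (Astar j).Normal :=
    .of_commutator_le G (hes.commutator_le_center.trans (hKF.center_le hp hG hes j))
  refine eq_top_of_le_card _ ?_
  rw [card_sup_of_inf_eq_bot _ _ (hKF.2.2.2.1 i j hij), hKF.1 i, hKF.2.1 j, hG]
  exact le_of_eq (by ring)

end IsKantorFamily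

theorem stmt6 {G : Type*} [Group G] (p : ℕ) (hp : p.Prime) (hodd : Odd p)
    (hG : Nat.card G = p ^ 5) (hes : IsExtraspecial p G)
    (A Astar : Fin (p + 1) → Subgroup G)
    (hKF : IsKantorFamily (p ^ 2) p A Astar) :
    (∀ g : G, g ^ p = 1) ∧
    (∀ i, IsMulCommutative (A i) ∧ ∀ g ∈ A i, g ^ p = 1) ∧
    (∀ i, IsMulCommutative (Astar i) ∧ ∀ g ∈ Astar i, g ^ p = 1) := by
  have : Finite G := Nat.finite_of_card_ne_zero (hG ▸ (pow_pos hp.pos 5).ne')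
  have : Fact p.Prime := ⟨hp⟩
  have hmul := mul_pow_of_odd hes.commutator_le_center hodd hes.commutatorElement_pow_eq_one
  have hAcomm (i : Fin (p + 1)) : IsMulCommutative (A i) :=
    IsPGroup.isMulCommutative_of_card_eq_prime_sq (hKF.1 i)
  have hA (i : Fin (p + 1)) : ∀ a ∈ A i, a ^ p = 1 :=
    fun _ => hKF.pow_eq_one_of_mem hp hG hes i
  have hAstar (i : Fin (p + 1)) : ∀ g ∈ Astar i, g ^ p = 1 := by
    rw [← hKF.sup_center_eq hp hG hes i]
    exact pow_eq_one_of_mem_sup hmul (hA i) fun _ => hes.pow_eq_one_of_mem_center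
  have hexp (g : G) : g ^ p = 1 := by
    have : Nontrivial (Fin (p + 1)) := Fin.nontrivial_iff_two_le.mpr (by linarith [hp.two_le])
    obtain ⟨i, j, hij⟩ := exists_pair_ne (Fin (p + 1))
    exact pow_eq_one_of_mem_sup hmul (hA i) (hAstar j) g
      (hKF.sup_eq_top hp hG hes hij ▸ mem_top g)
  have hAstarComm (i : Fin (p + 1)) : IsMulCommutative (Astar i) :=
    hKF.sup_center_eq hp hG hes i ▸ isMulCommutative_sup_center (A i)
  exact ⟨hexp, fun i => ⟨hAcomm i, fun g _ => hexp g⟩,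
    fun i => ⟨hAstarComm i, fun g _ => hexp g⟩⟩
end

section
/- Let p be a prime and let G be a finite p-group of nilpotency class 2 generated by three elements x, y, z, with derived subgroup G' elementary abelian of order p². Then there exist generators x', y', z' of G such that [y', z'] = 1 and G' = ⟨[x',y'], [x',z']⟩. -/
/-!
In a group of class two the commutator map is bilinear with central values, so `G'` is
generated by `⁅x, y⁆`, `⁅y, z⁆`, `⁅z, x⁆`. Since `|G'| = p²`, one of these lies in the subgroup
generated by the other two: if `⁅y, z⁆ ∉ ⟨⁅x, y⁆, ⁅z, x⁆⟩`, that subgroup has order `1` or `p`,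
hence is generated by any of its nontrivial elements. So after a cyclic relabelling
`⁅y, z⁆ = ⁅x, y⁆ ^ a * ⁅z, x⁆ ^ b`; then `y * x ^ b` and `z * x ^ a` commute, and together with `x`
they still generate `G`.
-/

open scoped commutatorElement

section

variable {G : Type*} [Group G]

namespace Subgroup

theorem exists_zpow_mul_zpow_eq_of_mem_closure_pair {u v w : G} (huv : Commute u v)
    (hw : w ∈ closure {u, v}) : ∃ m n : ℤ, u ^ m * v ^ n = w := by
  induction hw using closure_induction with
  | mem w hw =>
    rcases hw with rfl | rfl
    exacts [⟨1, 0, by simp⟩, ⟨0, 1, by simp⟩]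
  | one => exact ⟨0, 0, by simp⟩
  | mul a b _ _ ha hb =>
    obtain ⟨m, n, rfl⟩ := ha
    obtain ⟨m', n', rfl⟩ := hb
    refine ⟨m + m', n + n', ?_⟩
    rw [zpow_add, zpow_add, mul_assoc, mul_assoc, ← mul_assoc (v ^ n),
      ← (huv.zpow_zpow m' n).eq, mul_assoc]
  | inv a _ ha =>
    obtain ⟨m, n, rfl⟩ := ha
    refine ⟨-m, -n, ?_⟩
    rw [mul_inv_rev, zpow_neg, zpow_neg, (huv.zpow_zpow m n).inv_inv.eq]

theorem closure_insert_mul_zpow (x y z : G) (s t : ℤ) :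
    closure {x, y * x ^ s, z * x ^ t} = closure {x, y, z} := by
  have key {K : Subgroup G} (hx : x ∈ K) :
      {x, y * x ^ s, z * x ^ t} ⊆ (K : Set G) ↔ {x, y, z} ⊆ (K : Set G) := by
    simp only [Set.insert_subset_iff, Set.singleton_subset_iff, SetLike.mem_coe,
      mul_mem_cancel_right (zpow_mem hx _)]
  apply le_antisymm
  · exact (closure_le _).mpr ((key (subset_closure (by simp))).mpr subset_closure)
  · exact (closure_le _).mpr ((key (subset_closure (by simp))).mp subset_closure)

theorem zpowers_eq_of_card_dvd_prime {p : ℕ} (hp : p.Prime) {H : Subgroup G}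
    (hH : Nat.card H ∣ p) {a : G} (ha : a ∈ H) (ha1 : a ≠ 1) : zpowers a = H := by
  have : Finite H := Nat.finite_of_card_ne_zero (ne_zero_of_dvd_ne_zero hp.ne_zero hH)
  have hle : zpowers a ≤ H := zpowers_le.mpr ha
  have hcard : Nat.card (zpowers a) = p := by
    rw [Nat.card_zpowers]
    refine (hp.eq_one_or_self_of_dvd _ ?_).resolve_left (by simpa using ha1)
    exact (Nat.card_zpowers a ▸ card_dvd_of_le hle).trans hH
  exact eq_of_le_of_card_ge hle (hcard ▸ Nat.le_of_dvd hp.pos hH)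

theorem mem_closure_pair_or_of_card_eq_prime_sq {p : ℕ} (hp : p.Prime) {K : Subgroup G}
    (hK : Nat.card K = p ^ 2) {a b c : G} (ha : a ∈ K) (hb : b ∈ K) (hc : c ∈ K) :
    c ∈ closure {a, b} ∨ a ∈ closure {b, c} ∨ b ∈ closure {c, a} := by
  by_cases hcab : c ∈ closure {a, b}
  · exact Or.inl hcab
  have : Finite K := Nat.finite_of_card_ne_zero (by simp [hK, hp.ne_zero])
  have hle : closure {a, b} ≤ K := (closure_le K).mpr (Set.insert_subset ha (by simpa))
  have hdvd : Nat.card (closure {a, b}) ∣ p := by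
    obtain ⟨k, hk, hcard⟩ := (Nat.dvd_prime_pow hp).mp (hK ▸ card_dvd_of_le hle)
    have hk2 : k ≠ 2 := by
      rintro rfl
      exact hcab (eq_of_le_of_card_ge hle (hK ▸ hcard.ge) ▸ hc)
    exact hcard ▸ (pow_dvd_pow p (by omega : k ≤ 1)).trans (pow_one p).dvd
  rcases eq_or_ne a 1 with rfl | ha1
  · exact Or.inr (Or.inl (one_mem _))
  · refine Or.inr (Or.inr ?_)
    have hb' : b ∈ zpowers a :=
      (zpowers_eq_of_card_dvd_prime hp hdvd (subset_closure (by simp)) ha1).symm ▸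
        subset_closure (by simp)
    exact zpowers_le.mpr (subset_closure (by simp)) hb'

end Subgroup

theorem commutatorElement_mem_commutator (a b : G) : ⁅a, b⁆ ∈ commutator G :=
  commutator_def G ▸ Subgroup.commutator_mem_commutator (Subgroup.mem_top a) (Subgroup.mem_top b)

theorem commutator_le_center_of_nilpotencyClass_le_two [Group.IsNilpotent G]
    (h : Group.nilpotencyClass G ≤ 2) : commutator G ≤ Subgroup.center G := by
  rw [← Subgroup.commutator_top_right_eq_bot_iff_le_center,
    ← Subgroup.top_lowerCentralSeries_one, ← Subgroup.lowerCentralSeries_succ]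
  exact Subgroup.lowerCentralSeries_eq_bot_iff_nilpotencyClass_le.mpr h

theorem commutatorElement_mem_center_s10 (hG : commutator G ≤ Subgroup.center G) (a b : G) :
    ⁅a, b⁆ ∈ Subgroup.center G :=
  hG (commutatorElement_mem_commutator a b)

def commutatorLeftHom (hG : commutator G ≤ Subgroup.center G) (b : G) : G →* G where
  toFun a := ⁅a, b⁆
  map_one' := commutatorElement_one_left b
  map_mul' a c := by
    rw [commutatorElement_mul_left_eq_conj_mul,
      Subgroup.mem_center_iff.mp (commutatorElement_mem_center_s10 hG c b) a, mul_inv_cancel_right,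
      Subgroup.mem_center_iff.mp (commutatorElement_mem_center_s10 hG a b)]

def commutatorRightHom (hG : commutator G ≤ Subgroup.center G) (a : G) : G →* G where
  toFun b := ⁅a, b⁆
  map_one' := commutatorElement_one_right a
  map_mul' b c := by
    rw [commutatorElement_mul_right_eq_mul_conj, mul_assoc _ b,
      Subgroup.mem_center_iff.mp (commutatorElement_mem_center_s10 hG a c) b, ← mul_assoc,
      mul_inv_cancel_right]

theorem commutatorElement_mul_zpow_mul_zpow (hG : commutator G ≤ Subgroup.center G)
    (x y z : G) (s t : ℤ) :
    ⁅y * x ^ s, z * x ^ t⁆ = ⁅y, z⁆ * ⁅y, x⁆ ^ t * ⁅x, z⁆ ^ s := by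
  have hL (a b c : G) : ⁅a * b, c⁆ = ⁅a, c⁆ * ⁅b, c⁆ :=
    map_mul (commutatorLeftHom hG c) a b
  have hR (a b c : G) : ⁅a, b * c⁆ = ⁅a, b⁆ * ⁅a, c⁆ :=
    map_mul (commutatorRightHom hG a) b c
  have hL' (a b : G) (n : ℤ) : ⁅a ^ n, b⁆ = ⁅a, b⁆ ^ n :=
    map_zpow (commutatorLeftHom hG b) a n
  have hR' (a b : G) (n : ℤ) : ⁅a, b ^ n⁆ = ⁅a, b⁆ ^ n :=
    map_zpow (commutatorRightHom hG a) b n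
  simp only [hL, hR, hL', hR', commutatorElement_self, one_zpow, mul_one]

theorem commutator_le_of_forall_commutatorElement_mem (hG : commutator G ≤ Subgroup.center G)
    {s : Set G} (hs : Subgroup.closure s = ⊤) {H : Subgroup G}
    (hH : ∀ a ∈ s, ∀ b ∈ s, ⁅a, b⁆ ∈ H) : commutator G ≤ H := by
  rw [commutator_def, ← hs, Subgroup.commutator_le]
  intro a ha b hb
  have hsb : ∀ a ∈ s, ⁅a, b⁆ ∈ H := fun a' ha' =>
    (Subgroup.closure_le (H.comap (commutatorRightHom hG a'))).mpr (hH a' ha') hb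
  exact (Subgroup.closure_le (H.comap (commutatorLeftHom hG b))).mpr hsb ha

theorem commutator_eq_closure_pair_of_commutatorElement_eq_one
    (hG : commutator G ≤ Subgroup.center G) {x y z : G}
    (hgen : Subgroup.closure {x, y, z} = ⊤) (hyz : ⁅y, z⁆ = 1) :
    commutator G = Subgroup.closure {⁅x, y⁆, ⁅x, z⁆} := by
  refine le_antisymm (commutator_le_of_forall_commutatorElement_mem hG hgen ?_)
    ((Subgroup.closure_le _).mpr
      (by simp [Set.insert_subset_iff, commutatorElement_mem_commutator]))
  set H := Subgroup.closure {⁅x, y⁆, ⁅x, z⁆}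
  have hxy : ⁅x, y⁆ ∈ H := Subgroup.subset_closure (by simp)
  have hxz : ⁅x, z⁆ ∈ H := Subgroup.subset_closure (by simp)
  have hyz : ⁅y, z⁆ ∈ H := hyz ▸ one_mem H
  have hswap {a b : G} (h : ⁅a, b⁆ ∈ H) : ⁅b, a⁆ ∈ H :=
    commutatorElement_inv a b ▸ inv_mem h
  simp only [Set.mem_insert_iff, Set.mem_singleton_iff]
  rintro a ha b hb
  rcases ha with rfl | rfl | rfl <;> rcases hb with rfl | rfl | rfl
  all_goals first
    | rw [commutatorElement_self]; exact one_mem H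
    | assumption
    | exact hswap ‹_›

theorem exists_generators_of_commutatorElement_mem_closure_pair
    (hG : commutator G ≤ Subgroup.center G) {x y z : G} (hgen : Subgroup.closure {x, y, z} = ⊤)
    (hyz : ⁅y, z⁆ ∈ Subgroup.closure {⁅x, y⁆, ⁅z, x⁆}) :
    ∃ x' y' z' : G, Subgroup.closure {x', y', z'} = ⊤ ∧ ⁅y', z'⁆ = 1 ∧
      commutator G = Subgroup.closure {⁅x', y'⁆, ⁅x', z'⁆} := by
  have hcomm (a b c d : G) : Commute ⁅a, b⁆ ⁅c, d⁆ :=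
    (Subgroup.mem_center_iff.mp (commutatorElement_mem_center_s10 hG a b) _).symm
  obtain ⟨a, b, hab⟩ := Subgroup.exists_zpow_mul_zpow_eq_of_mem_closure_pair (hcomm x y z x) hyz
  have hgen' : Subgroup.closure {x, y * x ^ b, z * x ^ a} = ⊤ :=
    (Subgroup.closure_insert_mul_zpow x y z b a).trans hgen
  have hyz' : ⁅y * x ^ b, z * x ^ a⁆ = 1 := by
    rw [commutatorElement_mul_zpow_mul_zpow hG, ← hab, ← commutatorElement_inv x y,
      ← commutatorElement_inv z x, inv_zpow, inv_zpow, ← commutatorElement_def,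
      commutatorElement_eq_one_iff_commute]
    exact (hcomm x y z x).zpow_zpow a b
  exact ⟨x, y * x ^ b, z * x ^ a, hgen', hyz',
    commutator_eq_closure_pair_of_commutatorElement_eq_one hG hgen' hyz'⟩

end

theorem stmt10_general {G : Type*} [Group G] (p : ℕ) (hp : p.Prime)
    [Group.IsNilpotent G]
    (hclass : Group.nilpotencyClass G = 2)
    (x y z : G) (hgen : Subgroup.closure {x, y, z} = ⊤)
    (hcard : Nat.card (commutator G) = p ^ 2) :
    ∃ x' y' z' : G, Subgroup.closure {x', y', z'} = ⊤ ∧ ⁅y', z'⁆ = 1 ∧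
      commutator G = Subgroup.closure {⁅x', y'⁆, ⁅x', z'⁆} := by
  have hG := commutator_le_center_of_nilpotencyClass_le_two hclass.le
  rcases Subgroup.mem_closure_pair_or_of_card_eq_prime_sq hp hcard
    (commutatorElement_mem_commutator x y) (commutatorElement_mem_commutator z x)
    (commutatorElement_mem_commutator y z) with h | h | h
  · exact exists_generators_of_commutatorElement_mem_closure_pair hG hgen h
  · refine exists_generators_of_commutatorElement_mem_closure_pair hG ?_ h
    rwa [Set.insert_comm, Set.pair_comm]
  · refine exists_generators_of_commutatorElement_mem_closure_pair hG ?_ h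
    rwa [Set.pair_comm, Set.insert_comm]

theorem stmt10 {G : Type*} [Group G] [Finite G] (p : ℕ) (hp : p.Prime)
    (hpG : IsPGroup p G) [Group.IsNilpotent G]
    (hclass : Group.nilpotencyClass G = 2)
    (x y z : G) (hgen : Subgroup.closure {x, y, z} = ⊤)
    (hcard : Nat.card (commutator G) = p ^ 2)
    (hexp : ∀ g ∈ commutator G, g ^ p = 1) :
    ∃ x' y' z' : G, Subgroup.closure {x', y', z'} = ⊤ ∧ ⁅y', z'⁆ = 1 ∧
      commutator G = Subgroup.closure {⁅x', y'⁆, ⁅x', z'⁆} :=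
  stmt10_general p hp hclass x y z hgen hcard
end

section
/- Let p be a prime and let G be a finite p-group with |G'| = p. Then the index |G : Z(G)| is an even power of p. -/
/-!
Once `G'` is central, `g ↦ ⁅x, g⁆` is a homomorphism `G →* G'` with kernel the centralizer of `x`;
this is the commutator form of `G / Z(G)` seen one variable at a time. If `|G'| = p` and
`⁅x, y⁆ ≠ 1`, then `g ↦ (⁅x, g⁆, ⁅y, g⁆)` maps `G` onto `G' × G'` already on the elements
`y ^ m * x ^ n`, so `H = C(x) ∩ C(y)` has index `p²` and `G = H ⟨y⟩ ⟨x⟩`, whence `Z(H) = Z(G)`.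
As `H'` is again central of order dividing `p`, induction on `[G : Z(G)]` splits off one factor
`p²` at a time, as in the construction of a symplectic basis. In a `p`-group a normal subgroup of
order `p` is central, which puts `G` in this situation.
-/

open Subgroup
open scoped commutatorElement

section

variable {G : Type*} [Group G]

theorem IsPGroup.le_center_of_card_eq_prime {p : ℕ} [Fact p.Prime] (hG : IsPGroup p G)
    {N : Subgroup G} [N.Normal] (hN : Nat.card N = p) : N ≤ center G := by
  have : Finite N := Nat.finite_of_card_ne_zero (hN ▸ (Fact.out : p.Prime).ne_zero)
  obtain ⟨b, hb, hb1⟩ :=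
    (hG.of_equiv ConjAct.toConjAct).exists_fixed_point_of_prime_dvd_card_of_fixed_point N
      (hN ▸ dvd_rfl) (a := 1) (fun g => smul_one g)
  have hb_center : (b : G) ∈ center G := by
    rw [← SetLike.mem_coe, ← ConjAct.fixedPoints_eq_center]
    exact fun g => congrArg Subtype.val (hb g)
  intro n hn
  obtain ⟨k, hk⟩ := mem_zpowers_of_prime_card hN (g' := ⟨n, hn⟩) (Ne.symm hb1)
  have hn_eq : (b : G) ^ k = n := congrArg Subtype.val hk
  exact hn_eq ▸ zpow_mem hb_center k

theorem MonoidHom.exists_zpow_eq_of_card_eq_prime {Δ : Type*} [Group Δ] {p : ℕ} [Fact p.Prime]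
    (hΔ : Nat.card Δ = p) (f : G →* Δ) {y : G} (hy : f y ≠ 1) (d : Δ) :
    ∃ m : ℤ, f (y ^ m) = d := by
  obtain ⟨m, hm⟩ := mem_zpowers_of_prime_card hΔ (g' := d) hy
  exact ⟨m, (map_zpow f y m).trans hm⟩

theorem commutatorElement_mem_commutator_s13 (x g : G) : ⁅x, g⁆ ∈ commutator G := by
  rw [commutator_def]
  exact commutator_mem_commutator (mem_top x) (mem_top g)

section CentralCommutator

variable (hc : commutator G ≤ center G)

def commutatorHom (x : G) : G →* commutator G where
  toFun g := ⟨⁅x, g⁆, commutatorElement_mem_commutator_s13 x g⟩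
  map_one' := Subtype.ext (commutatorElement_one_right x)
  map_mul' g h := by
    ext
    have hcomm : g * ⁅x, h⁆ = ⁅x, h⁆ * g :=
      mem_center_iff.mp (hc (commutatorElement_mem_commutator_s13 x h)) g
    calc ⁅x, g * h⁆ = ⁅x, g⁆ * (g * ⁅x, h⁆ * g⁻¹) := by group
      _ = ⁅x, g⁆ * ⁅x, h⁆ := by rw [hcomm]; group

@[simp]
theorem coe_commutatorHom_apply (x g : G) : (commutatorHom hc x g : G) = ⁅x, g⁆ := rfl

theorem commutatorHom_self (x : G) : commutatorHom hc x x = 1 :=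
  Subtype.ext (commutatorElement_self x)

theorem ker_commutatorHom (x : G) : (commutatorHom hc x).ker = centralizer {x} := by
  ext g
  rw [MonoidHom.mem_ker, mem_centralizer_singleton_iff, ← Subtype.coe_inj,
    coe_commutatorHom_apply, OneMemClass.coe_one, commutatorElement_eq_one_iff_commute]
  exact ⟨Commute.symm, Commute.symm⟩

end CentralCommutator

theorem Subgroup.centralizer_pair (x y : G) :
    centralizer {x, y} = centralizer {x} ⊓ centralizer {y} := by
  ext g
  simp [mem_centralizer_iff]

theorem exists_commutatorElement_ne_one (h : commutator G ≠ ⊥) : ∃ x y : G, ⁅x, y⁆ ≠ 1 := by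
  by_contra! hall
  refine h ((commutator_eq_bot_iff_center_eq_top G).mpr ((eq_top_iff' _).mpr fun g => ?_))
  exact mem_center_iff.mpr fun x => commutatorElement_eq_one_iff_mul_comm.mp (hall x g)

theorem map_subtype_commutator_le (K : Subgroup G) :
    (commutator K).map K.subtype ≤ commutator G := by
  rw [map_commutator_eq, commutator_def]
  exact commutator_mono le_top le_top

theorem card_commutator_subgroup_dvd (K : Subgroup G) :
    Nat.card (commutator K) ∣ Nat.card (commutator G) := by
  rw [← card_subtype K]
  exact card_dvd_of_le (map_subtype_commutator_le K)

theorem commutator_subgroup_le_center (K : Subgroup G) (hc : commutator G ≤ center G) :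
    commutator K ≤ center K := fun c hcK =>
  mem_center_iff.mpr fun k =>
    Subtype.ext (mem_center_iff.mp (hc (map_subtype_commutator_le K ⟨c, hcK, rfl⟩)) k)

section CommutingPair

variable {p : ℕ} [Fact p.Prime] {x y : G}

theorem ker_commutatorHom_prod (hc : commutator G ≤ center G) (x y : G) :
    ((commutatorHom hc x).prod (commutatorHom hc y)).ker = centralizer {x, y} := by
  rw [MonoidHom.ker_prod, ker_commutatorHom, ker_commutatorHom, centralizer_pair]

theorem exists_zpow_mul_zpow_eq (hc : commutator G ≤ center G)
    (hG' : Nat.card (commutator G) = p) (hxy : ⁅x, y⁆ ≠ 1) (c : commutator G × commutator G) :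
    ∃ m n : ℤ, (commutatorHom hc x).prod (commutatorHom hc y) (y ^ m * x ^ n) = c := by
  have hx : commutatorHom hc x y ≠ 1 := fun h => hxy (congrArg Subtype.val h)
  have hy : commutatorHom hc y x ≠ 1 := fun h =>
    hxy (by rw [← commutatorElement_inv, inv_eq_one]; exact congrArg Subtype.val h)
  obtain ⟨m, hm⟩ := (commutatorHom hc x).exists_zpow_eq_of_card_eq_prime hG' hx c.1
  obtain ⟨n, hn⟩ := (commutatorHom hc y).exists_zpow_eq_of_card_eq_prime hG' hy c.2
  refine ⟨m, n, Prod.ext ?_ ?_⟩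
  · simp [hm, commutatorHom_self]
  · simp [hn, commutatorHom_self]

theorem index_centralizer_pair (hc : commutator G ≤ center G)
    (hG' : Nat.card (commutator G) = p) (hxy : ⁅x, y⁆ ≠ 1) :
    (centralizer {x, y}).index = p ^ 2 := by
  have hsurj : Function.Surjective ((commutatorHom hc x).prod (commutatorHom hc y)) := fun c =>
    let ⟨m, n, h⟩ := exists_zpow_mul_zpow_eq hc hG' hxy c
    ⟨_, h⟩
  rw [← ker_commutatorHom_prod hc, index_ker, MonoidHom.range_eq_top.mpr hsurj,
    card_top, Nat.card_prod, hG', sq]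

theorem center_centralizer_pair (hc : commutator G ≤ center G)
    (hG' : Nat.card (commutator G) = p) (hxy : ⁅x, y⁆ ≠ 1) :
    center (centralizer {x, y}) = (center G).subgroupOf (centralizer {x, y}) := by
  ext z
  rw [mem_subgroupOf, mem_center_iff, mem_center_iff]
  refine ⟨fun hz g => ?_, fun hz h => Subtype.ext (hz h)⟩
  obtain ⟨m, n, hmn⟩ :=
    exists_zpow_mul_zpow_eq hc hG' hxy ((commutatorHom hc x).prod (commutatorHom hc y) g)
  have hh : g * (y ^ m * x ^ n)⁻¹ ∈ centralizer {x, y} := by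
    rw [← ker_commutatorHom_prod hc, MonoidHom.mem_ker, map_mul, map_inv, hmn, mul_inv_cancel]
  have hzx : Commute x z := mem_centralizer_iff.mp z.2 x (by simp)
  have hzy : Commute y z := mem_centralizer_iff.mp z.2 y (by simp)
  have hzh : Commute (g * (y ^ m * x ^ n)⁻¹) z := congrArg Subtype.val (hz ⟨_, hh⟩)
  rw [show g = g * (y ^ m * x ^ n)⁻¹ * (y ^ m * x ^ n) by group]
  exact hzh.mul_left ((hzy.zpow_left m).mul_left (hzx.zpow_left n))

theorem index_center_eq_index_center_centralizer_pair_mul (hc : commutator G ≤ center G)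
    (hG' : Nat.card (commutator G) = p) (hxy : ⁅x, y⁆ ≠ 1) :
    (center G).index = (center (centralizer {x, y})).index * p ^ 2 := by
  rw [← relIndex_mul_index (center_le_centralizer _), relIndex,
    ← center_centralizer_pair hc hG' hxy, index_centralizer_pair hc hG' hxy]

end CommutingPair

theorem exists_index_center_eq_pow_two_mul {p : ℕ} [Fact p.Prime] [(center G).FiniteIndex]
    (hc : commutator G ≤ center G) (hG' : Nat.card (commutator G) ∣ p) :
    ∃ k : ℕ, (center G).index = p ^ (2 * k) := by
  induction hn : (center G).index using Nat.strong_induction_on generalizing G with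
  | _ n ih =>
  rcases (Nat.dvd_prime Fact.out).mp hG' with h1 | hp
  · refine ⟨0, ?_⟩
    rw [← hn, (commutator_eq_bot_iff_center_eq_top G).mp (card_eq_one.mp h1), index_top]
    rfl
  have hne : commutator G ≠ ⊥ := fun h => by
    rw [h, card_bot] at hp
    exact (Fact.out : p.Prime).one_lt.ne hp
  obtain ⟨x, y, hxy⟩ := exists_commutatorElement_ne_one hne
  have hindex := index_center_eq_index_center_centralizer_pair_mul hc hp hxy
  have : (center (centralizer {x, y})).FiniteIndex :=
    ⟨fun h => FiniteIndex.index_ne_zero (H := center G) (by rw [hindex, h, zero_mul])⟩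
  have hlt : (center (centralizer {x, y})).index < n := by
    rw [← hn, hindex]
    exact lt_mul_of_one_lt_right (Nat.pos_of_ne_zero FiniteIndex.index_ne_zero)
      (Nat.one_lt_pow two_ne_zero (Fact.out : p.Prime).one_lt)
  obtain ⟨k, hk⟩ := ih _ hlt (commutator_subgroup_le_center _ hc)
    (hp ▸ card_commutator_subgroup_dvd _) rfl
  exact ⟨k + 1, by rw [← hn, hindex, hk, mul_add, mul_one, pow_add]⟩

end

theorem stmt13 {G : Type*} [Group G] [Finite G] (p : ℕ) (hp : p.Prime)
    (hpG : IsPGroup p G) (hG' : Nat.card (commutator G) = p) :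
    ∃ k : ℕ, (Subgroup.center G).index = p ^ (2 * k) := by
  have : Fact p.Prime := ⟨hp⟩
  exact exists_index_center_eq_pow_two_mul (hpG.le_center_of_card_eq_prime hG') (hG' ▸ dvd_rfl)
end

section
/- Let p be an odd prime and let E be an extraspecial group of order p⁵ of exponent p. Let Z = Z(E) (of order p), and let A, B, C be subgroups of E of order p², pairwise intersecting trivially and satisfying AB ∩ C = 1. Suppose H is an abelian subgroup of E of order p³ containing Z such that |H ∩ AZ| = |H ∩ BZ| = p². Then H ∩ CZ = Z. -/
open scoped Pointwise

/-!
Commutators are central, so for noncentral `w` the homomorphism `g ↦ ⁅w, g⁆` onto `Z` gives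
`|C_E(w)| = p⁴`: two abelian subgroups of order `p²` meeting trivially and centralizing `w`
multiply to `C_E(w)`. With the triple condition, a noncentral element centralizing two of `A`,
`B`, `C` therefore centralizes no nontrivial element of the third. Applied to `c` and to elements
of `A`, this gives `Z ≰ A`, `Z ≰ B` and `H ∩ AZ ≠ H ∩ BZ`, whence `H = (H ∩ AZ)(H ∩ BZ)`,
`c = a b z` with commuting `a ∈ A`, `b ∈ B`, `z ∈ Z`, and `E = A B Z`. For `d = a' b' z' ∈ C`,
`c ^ k d = (a ^ k a') (b ^ k b') (z ⁅b, a'⁆) ^ k z'`, so if `z ⁅b, a'⁆ ≠ 1` some `c ^ k d` lies in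
`A B ∩ C = 1`. Passing from `d` to `d⁻¹` inverts `⁅b, a'⁆`, and as `p` is odd one of the two
works; hence `C = ⟨c⟩`, contradicting `|C| = p²`.
-/

open scoped commutatorElement
open Subgroup

section

variable {G : Type*} [Group G]

lemma le_centralizer_singleton {K : Subgroup G} [IsMulCommutative K] {k : G} (hk : k ∈ K) :
    K ≤ centralizer {k} :=
  (le_centralizer K).trans (centralizer_le (Set.singleton_subset_iff.mpr hk))

lemma centralizer_singleton_mul_of_mem_center {g z : G} (hz : z ∈ center G) :
    centralizer {g * z} = centralizer {g} := by
  ext k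
  rw [mem_centralizer_singleton_iff, mem_centralizer_singleton_iff, ← mul_assoc, mul_assoc g,
    ← mem_center_iff.mp hz k, ← mul_assoc, mul_left_inj]

lemma sup_le_centralizer_of_mem {A B : Subgroup G} [IsMulCommutative A] [IsMulCommutative B]
    {g : G} (hgA : g ∈ A) (hgB : g ∈ B ⊔ center G) : A ⊔ B ≤ centralizer {g} := by
  obtain ⟨b, hb, z, hz, rfl⟩ := mem_sup_of_normal_right.mp hgB
  refine sup_le (le_centralizer_singleton hgA) ?_
  rw [centralizer_singleton_mul_of_mem_center hz]
  exact le_centralizer_singleton hb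

lemma commutatorElement_mem_center_s15 (h : commutator G ≤ center G) (g k : G) : ⁅g, k⁆ ∈ center G :=
  h (commutator_mem_commutator (mem_top g) (mem_top k))

lemma commutatorElement_inv_right_of_mem_center {x y : G} (h : ⁅x, y⁆ ∈ center G) :
    ⁅x, y⁻¹⁆ = ⁅x, y⁆⁻¹ := by
  rw [commutatorElement_inv_right, ← commutatorElement_inv, mul_assoc,
    ← mem_center_iff.mp (inv_mem h) y, inv_mul_cancel_left]

lemma commutatorElement_mul_right_of_commute {x y u : G} (h : Commute x u) :
    ⁅x, y * u⁆ = ⁅x, y⁆ := by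
  rw [commutatorElement_mul_right_eq_mul_conj, commutatorElement_eq_one_iff_commute.mpr h,
    mul_one, mul_inv_cancel_right]

lemma pow_mul_eq_mul_pow_mul_commutatorElement_pow {x y : G} (h : ⁅x, y⁆ ∈ center G) (k : ℕ) :
    x ^ k * y = y * x ^ k * ⁅x, y⁆ ^ k := by
  induction k with
  | zero => simp
  | succ k ih =>
    have hxy : x * y = y * x * ⁅x, y⁆ := by
      rw [mem_center_iff.mp h, commutatorElement_def]; group
    rw [pow_succ, mul_assoc, hxy, ← mul_assoc, ← mul_assoc, ih, mul_assoc _ (⁅x, y⁆ ^ k),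
      ← mem_center_iff.mp (pow_mem h k) x]
    simp only [pow_succ, mul_assoc]

lemma mul_mul_pow_mul_mul_mul {a b z a' b' z' : G} (hab : Commute a b) (hz : z ∈ center G)
    (hz' : z' ∈ center G) (h : ⁅b, a'⁆ ∈ center G) (k : ℕ) :
    (a * b * z) ^ k * (a' * b' * z') = a ^ k * a' * (b ^ k * b') * ((z * ⁅b, a'⁆) ^ k * z') := by
  have hmove : ∀ {w : G}, w ∈ center G → ∀ x y : G, x * w * y = x * y * w := fun hw x y => by
    rw [mul_assoc, ← mem_center_iff.mp hw y, mul_assoc]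
  have hzc : Commute (a * b) z := mem_center_iff.mp hz _
  have hzγ : Commute z ⁅b, a'⁆ := mem_center_iff.mp h z
  rw [hzc.mul_pow, hab.mul_pow, hzγ.mul_pow]
  calc a ^ k * b ^ k * z ^ k * (a' * b' * z')
      = a ^ k * (b ^ k * a') * b' * z' * z ^ k := by
        rw [hmove (pow_mem hz k)]; simp only [mul_assoc]
    _ = a ^ k * a' * b ^ k * b' * z ^ k * ⁅b, a'⁆ ^ k * z' := by
        rw [pow_mul_eq_mul_pow_mul_commutatorElement_pow h, hmove hz', ← mul_assoc, ← mul_assoc,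
          hmove (pow_mem h k), hmove (pow_mem h k)]
    _ = _ := by simp only [mul_assoc]

lemma zpowers_eq_of_card_prime {N : Subgroup G} (hN : (Nat.card N).Prime) {z : G} (hz : z ∈ N)
    (hz1 : z ≠ 1) : zpowers z = N := by
  have : Finite N := Nat.finite_of_card_ne_zero hN.ne_zero
  have hle : zpowers z ≤ N := zpowers_le.mpr hz
  refine eq_of_le_of_card_ge hle ((hN.eq_one_or_self_of_dvd _ (card_dvd_of_le hle)).resolve_left
    fun h => hz1 ?_).ge
  rwa [card_eq_one, zpowers_eq_bot] at h

lemma disjoint_center_of_not_le (hZ : (Nat.card (center G)).Prime) {K : Subgroup G}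
    (h : ¬ center G ≤ K) : Disjoint K (center G) := by
  refine disjoint_def.mpr fun {g} hgK hgZ => ?_
  by_contra hg1
  exact h (zpowers_eq_of_card_prime hZ hgZ hg1 ▸ zpowers_le.mpr hgK)

lemma index_centralizer_of_notMem_center {p : ℕ} (hp : p.Prime) (hZ : Nat.card (center G) = p)
    (hcomm : commutator G ≤ center G) {w : G} (hw : w ∉ center G) :
    (centralizer {w}).index = p := by
  let φ : G →* center G :=
    { toFun g := ⟨⁅w, g⁆, commutatorElement_mem_center_s15 hcomm w g⟩
      map_one' := by ext; simp
      map_mul' g h := by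
        ext
        simp only [commutatorElement_mul_right_eq_mul_conj, coe_mul]
        rw [mul_assoc _ g, mem_center_iff.mp (commutatorElement_mem_center_s15 hcomm w h) g,
          ← mul_assoc, mul_inv_cancel_right] }
  have hker : φ.ker = centralizer {w} := by
    ext g
    simp [φ, MonoidHom.mem_ker, mem_centralizer_singleton_iff, Subtype.ext_iff,
      commutatorElement_eq_one_iff_mul_comm, eq_comm]
  have hrange : Nat.card φ.range ≠ 1 := by
    intro h
    rw [card_eq_one, MonoidHom.range_eq_bot_iff] at h
    refine hw (mem_center_iff.mpr fun g => ?_)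
    have := congrArg Subtype.val (DFunLike.congr_fun h g)
    simpa [φ, commutatorElement_eq_one_iff_mul_comm, eq_comm] using this
  rw [← hker, index_ker]
  exact (hp.eq_one_or_self_of_dvd _ (hZ ▸ card_subgroup_dvd_card _)).resolve_left hrange

lemma card_mul_of_disjoint {K L : Subgroup G} (h : Disjoint K L) :
    Nat.card ((K : Set G) * (L : Set G)) = Nat.card K * Nat.card L := by
  have : (K : Set G) * (L : Set G) = Set.range fun x : K × L => (x.1 : G) * x.2 := by
    ext; simp [Set.mem_mul]
  rw [this, Nat.card_range_of_injective (mul_injective_of_disjoint h), Nat.card_prod]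

lemma centralizer_eq_mul [Finite G] {p : ℕ} (hp : p.Prime) (hZ : Nat.card (center G) = p)
    (hcomm : commutator G ≤ center G) {w : G} (hw : w ∉ center G) {K L : Subgroup G}
    (hK : K ≤ centralizer {w}) (hL : L ≤ centralizer {w}) (hKL : Disjoint K L)
    (hcard : Nat.card K * Nat.card L * p = Nat.card G) :
    (centralizer {w} : Set G) = (K : Set G) * (L : Set G) := by
  refine (Set.eq_of_subset_of_ncard_le (Set.mul_subset_iff.mpr fun k hk l hl =>
    mul_mem (hK hk) (hL hl)) ?_ (Set.toFinite _)).symm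
  rw [← Nat.card_coe_set_eq, ← Nat.card_coe_set_eq, card_mul_of_disjoint hKL]
  have := card_mul_index (centralizer {w})
  rw [index_centralizer_of_notMem_center hp hZ hcomm hw, ← hcard] at this
  exact (Nat.eq_of_mul_eq_mul_right hp.pos this).le

lemma le_of_card_inf_eq [Finite G] {H K : Subgroup G} (h : Nat.card ↥(H ⊓ K) = Nat.card K) :
    K ≤ H :=
  inf_eq_right.mp (eq_of_le_of_card_ge inf_le_right h.ge)

lemma exists_mem_notMem_of_card_lt [Finite G] {H K N : Subgroup G} [N.Normal] (hNH : N ≤ H)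
    (h : Nat.card N < Nat.card ↥(H ⊓ (K ⊔ N))) : ∃ k ∈ K, k ∈ H ∧ k ∉ N := by
  obtain ⟨u, ⟨huH, huKN⟩, huN⟩ := SetLike.not_le_iff_exists.mp fun hle =>
    (card_le_of_le hle).not_gt h
  obtain ⟨k, hk, n, hn, rfl⟩ := mem_sup_of_normal_right.mp huKN
  exact ⟨k, hk, (mul_mem_cancel_right (hNH hn)).mp huH, fun hkN => huN (mul_mem hkN hn)⟩

lemma sup_eq_of_card_mul_prime [Finite G] {p : ℕ} (hp : p.Prime) {H K L : Subgroup G}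
    (hK : K ≤ H) (hL : L ≤ H) (hKH : Nat.card K * p = Nat.card H)
    (hLK : Nat.card L = Nat.card K) (hne : K ≠ L) : K ⊔ L = H := by
  obtain ⟨m, hm⟩ := card_dvd_of_le (le_sup_left : K ≤ K ⊔ L)
  have hmp : m ∣ p := by
    have := card_dvd_of_le (sup_le hK hL)
    rw [hm, ← hKH] at this
    exact Nat.dvd_of_mul_dvd_mul_left Nat.card_pos this
  rcases hp.eq_one_or_self_of_dvd m hmp with rfl | rfl
  · have hKL : K = K ⊔ L := eq_of_le_of_card_ge le_sup_left (by rw [hm, mul_one])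
    exact absurd (eq_of_le_of_card_ge (hKL ▸ le_sup_right) hLK.ge).symm hne
  · exact eq_of_le_of_card_ge (sup_le hK hL) (by rw [hm, hKH])

lemma exists_commute_mul_mul_eq {H K L : Subgroup G} [IsMulCommutative H]
    (hcomm : commutator G ≤ center G) (hZH : center G ≤ H) {x : G}
    (hx : x ∈ H ⊓ (K ⊔ center G) ⊔ H ⊓ (L ⊔ center G)) :
    ∃ k ∈ K, ∃ l ∈ L, ∃ z ∈ center G, Commute k l ∧ k * l * z = x := by
  have : (H ⊓ (L ⊔ center G)).Normal :=
    Normal.of_commutator_le G (hcomm.trans (le_inf hZH le_sup_right))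
  obtain ⟨_, ⟨huH, hu⟩, _, ⟨hvH, hv⟩, rfl⟩ := mem_sup_of_normal_right.mp hx
  obtain ⟨k, hk, z₁, hz₁, rfl⟩ := mem_sup_of_normal_right.mp hu
  obtain ⟨l, hl, z₂, hz₂, rfl⟩ := mem_sup_of_normal_right.mp hv
  refine ⟨k, hk, l, hl, z₁ * z₂, mul_mem hz₁ hz₂, setLike_mul_comm (s := H)
    ((mul_mem_cancel_right (hZH hz₁)).mp huH) ((mul_mem_cancel_right (hZH hz₂)).mp hvH), ?_⟩
  simp only [mul_assoc]
  rw [← mul_assoc z₁, ← mem_center_iff.mp hz₁ l, mul_assoc]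

lemma exists_mul_mul_eq [Finite G] {A B N : Subgroup G} [N.Normal] (hBN : Disjoint B N)
    (hABN : Disjoint A (B ⊔ N)) (hcard : Nat.card A * Nat.card B * Nat.card N = Nat.card G)
    (g : G) : ∃ a ∈ A, ∃ b ∈ B, ∃ n ∈ N, a * b * n = g := by
  have hBNcard : Nat.card ↥(B ⊔ N) = Nat.card B * Nat.card N := by
    rw [← card_mul_of_disjoint hBN, ← mul_normal]
    rfl
  obtain ⟨⟨⟨a, ha⟩, ⟨y, hy⟩⟩, rfl⟩ :=
    (isComplement'_of_card_mul_and_disjoint (by rw [hBNcard, ← mul_assoc, hcard]) hABN).2 g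
  obtain ⟨b, hb, n, hn, rfl⟩ := mem_sup_of_normal_right.mp hy
  exact ⟨a, ha, b, hb, n, hn, mul_assoc a b n⟩

/-- Given `A ⊓ B = ⊥`, this is the triple condition `A B ∩ C = 1`, in a form invariant under
permuting the three subgroups. -/
def IndepTriple (A B C : Subgroup G) : Prop :=
  ∀ a ∈ A, ∀ b ∈ B, ∀ c ∈ C, a * b * c = 1 → a = 1 ∧ b = 1 ∧ c = 1

namespace IndepTriple

variable {A B C : Subgroup G}

lemma of_mul_inter (hAB : A ⊓ B = ⊥) (h : ∀ g ∈ (A : Set G) * (B : Set G), g ∈ C → g = 1) :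
    IndepTriple A B C := by
  intro a ha b hb c hc habc
  have hab : a * b = c⁻¹ := eq_inv_of_mul_eq_one_left habc
  have hab1 : a * b = 1 := h _ (Set.mul_mem_mul ha hb) (by rw [hab]; exact inv_mem hc)
  have ha1 : a = 1 := by
    have : a ∈ A ⊓ B := mem_inf.mpr ⟨ha, by rw [eq_inv_of_mul_eq_one_left hab1]; exact inv_mem hb⟩
    rwa [hAB, mem_bot] at this
  refine ⟨ha1, by rwa [ha1, one_mul] at hab1, ?_⟩
  rw [← inv_eq_one, ← hab, hab1]

lemma rotate (hT : IndepTriple A B C) : IndepTriple B C A := by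
  intro b hb c hc a ha h
  have : a * b * c = 1 := by
    calc a * b * c = a * (b * c * a) * a⁻¹ := by group
      _ = 1 := by rw [h, mul_one, mul_inv_cancel]
  obtain ⟨ha1, hb1, hc1⟩ := hT a ha b hb c hc this
  exact ⟨hb1, hc1, ha1⟩

lemma reverse (hT : IndepTriple A B C) : IndepTriple C B A := by
  intro c hc b hb a ha h
  have : a⁻¹ * b⁻¹ * c⁻¹ = 1 := by rw [← mul_inv_rev, ← mul_inv_rev, ← mul_assoc, h, inv_one]
  obtain ⟨ha1, hb1, hc1⟩ := hT _ (inv_mem ha) _ (inv_mem hb) _ (inv_mem hc) this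
  exact ⟨inv_eq_one.mp hc1, inv_eq_one.mp hb1, inv_eq_one.mp ha1⟩

lemma disjoint (hT : IndepTriple A B C) : Disjoint A B :=
  disjoint_def.mpr fun {g} (hgA : g ∈ A) (hgB : g ∈ B) =>
    (hT g hgA g⁻¹ (inv_mem hgB) 1 (one_mem C) (by rw [mul_inv_cancel, mul_one])).1

lemma eq_one_of_mem_centralizer [Finite G] (hT : IndepTriple A B C) {p : ℕ} (hp : p.Prime)
    (hZ : Nat.card (center G) = p) (hcomm : commutator G ≤ center G) {w : G} (hw : w ∉ center G)
    (hA : A ≤ centralizer {w}) (hB : B ≤ centralizer {w})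
    (hcard : Nat.card A * Nat.card B * p = Nat.card G) {c : G} (hc : c ∈ C)
    (hcw : c ∈ centralizer {w}) : c = 1 := by
  have : c ∈ (A : Set G) * (B : Set G) :=
    centralizer_eq_mul hp hZ hcomm hw hA hB hT.disjoint hcard ▸ hcw
  obtain ⟨a, ha, b, hb, rfl⟩ := this
  exact inv_eq_one.mp (hT a ha b hb _ (inv_mem hc) (mul_inv_cancel _)).2.2

lemma mem_zpowers_of_mul_commutatorElement_ne_one [Finite G] (hT : IndepTriple A B C)
    [IsMulCommutative B] (hZ : (Nat.card (center G)).Prime) (hcomm : commutator G ≤ center G)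
    (hdec : ∀ g : G, ∃ a ∈ A, ∃ b ∈ B, ∃ z ∈ center G, a * b * z = g)
    {a b z d : G} (ha : a ∈ A) (hb : b ∈ B) (hab : Commute a b) (hz : z ∈ center G)
    (hc : a * b * z ∈ C) (hd : d ∈ C) (hne : z * ⁅b, d⁆ ≠ 1) : d ∈ zpowers (a * b * z) := by
  obtain ⟨a', ha', b', hb', z', hz', rfl⟩ := hdec d
  have hγ : ⁅b, a'⁆ ∈ center G := commutatorElement_mem_center_s15 hcomm b a'
  rw [mul_assoc a', commutatorElement_mul_right_of_commute
    ((show Commute b b' from setLike_mul_comm hb hb').mul_right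
      (mem_center_iff.mp hz' b))] at hne
  obtain ⟨k, hk : (z * ⁅b, a'⁆) ^ k = z'⁻¹⟩ : z'⁻¹ ∈ Submonoid.powers (z * ⁅b, a'⁆) :=
    mem_powers_iff_mem_zpowers.mpr
      ((zpowers_eq_of_card_prime hZ (mul_mem hz hγ) hne).symm ▸ inv_mem hz')
  have hprod : (a * b * z) ^ k * (a' * b' * z') = a ^ k * a' * (b ^ k * b') := by
    rw [mul_mul_pow_mul_mul_mul hab hz hz' hγ, hk, inv_mul_cancel, mul_one]
  have h1 : (a * b * z) ^ k * (a' * b' * z') = 1 :=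
    inv_eq_one.mp (hT _ (mul_mem (pow_mem ha k) ha') _ (mul_mem (pow_mem hb k) hb') _
      (inv_mem (mul_mem (pow_mem hc k) hd)) (by rw [hprod, mul_inv_cancel])).2.2
  rw [eq_inv_of_mul_eq_one_right h1]
  exact inv_mem (pow_mem (mem_zpowers _) k)

lemma eq_one_of_mul_mul_mem [Finite G] (hT : IndepTriple A B C) [IsMulCommutative B] {p : ℕ}
    (hp : p.Prime) (hodd : Odd p) (hexp : ∀ g : G, g ^ p = 1) (hZ : Nat.card (center G) = p)
    (hcomm : commutator G ≤ center G) (hC : Nat.card C = p ^ 2)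
    (hdec : ∀ g : G, ∃ a ∈ A, ∃ b ∈ B, ∃ z ∈ center G, a * b * z = g)
    {a b z : G} (ha : a ∈ A) (hb : b ∈ B) (hab : Commute a b) (hz : z ∈ center G)
    (hc : a * b * z ∈ C) : a * b * z = 1 := by
  by_contra hc1
  have hz1 : z ≠ 1 := by
    rintro rfl
    exact hc1 (inv_eq_one.mp (hT a ha b hb _ (inv_mem hc) (by rw [mul_one, mul_inv_cancel])).2.2)
  obtain ⟨d, hd, hdc⟩ : ∃ d ∈ C, d ∉ zpowers (a * b * z) := by
    by_contra! h
    have := (card_le_of_le h).trans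
      ((Nat.card_zpowers _).trans_le (orderOf_le_of_pow_eq_one hp.pos (hexp _)))
    rw [hC] at this
    nlinarith [hp.two_le]
  have key : ∀ e ∈ C, z * ⁅b, e⁆ ≠ 1 → e ∈ zpowers (a * b * z) := fun e he =>
    hT.mem_zpowers_of_mul_commutatorElement_ne_one (hZ ▸ hp) hcomm hdec ha hb hab hz hc he
  have h1 : z * ⁅b, d⁆ = 1 := by_contra fun h => hdc (key d hd h)
  have h2 : z * ⁅b, d⁆⁻¹ = 1 := by_contra fun h => hdc (inv_mem_iff.mp (key _ (inv_mem hd)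
    (by rwa [commutatorElement_inv_right_of_mem_center (commutatorElement_mem_center_s15 hcomm b d)])))
  have hzz : z ^ 2 = 1 := by
    rw [sq]
    nth_rewrite 1 [eq_inv_of_mul_eq_one_left h1]
    rw [eq_inv_of_mul_eq_one_left h2, inv_inv, inv_mul_cancel]
  obtain ⟨t, rfl⟩ := hodd
  have := hexp z
  rw [pow_succ, pow_mul, hzz, one_pow, one_mul] at this
  exact hz1 this

lemma inf_le_center [Finite G] (hT : IndepTriple A B C) [IsMulCommutative A]
    [IsMulCommutative B] [IsMulCommutative C] {H : Subgroup G} [IsMulCommutative H] {p : ℕ}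
    (hp : p.Prime) (hodd : Odd p) (hexp : ∀ g : G, g ^ p = 1) (hG : Nat.card G = p ^ 5)
    (hZ : Nat.card (center G) = p) (hcomm : commutator G ≤ center G)
    (hA : Nat.card A = p ^ 2) (hB : Nat.card B = p ^ 2) (hC : Nat.card C = p ^ 2)
    (hH : Nat.card H = p ^ 3) (hZH : center G ≤ H)
    (hHA : Nat.card ↥(H ⊓ (A ⊔ center G)) = p ^ 2)
    (hHB : Nat.card ↥(H ⊓ (B ⊔ center G)) = p ^ 2) : H ⊓ C ≤ center G := by
  intro c hcHC
  obtain ⟨hcH, hc⟩ := mem_inf.mp hcHC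
  have hcent {K L M : Subgroup G} (hT : IndepTriple K L M) (hK : Nat.card K = p ^ 2)
      (hL : Nat.card L = p ^ 2) {w : G} (hw : w ∉ center G) (hKw : K ≤ centralizer {w})
      (hLw : L ≤ centralizer {w}) {m : G} (hm : m ∈ M) (hmw : m ∈ centralizer {w}) : m = 1 :=
    hT.eq_one_of_mem_centralizer hp hZ hcomm hw hKw hLw (by rw [hK, hL, hG]; ring) hm hmw
  have hpp : p < p ^ 2 := lt_self_pow₀ hp.one_lt one_lt_two
  by_contra hcZ
  have hHc : H ≤ centralizer {c} := le_centralizer_singleton hcH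
  obtain ⟨a, haA, haH, haZ⟩ := exists_mem_notMem_of_card_lt hZH (hZ ▸ hHA ▸ hpp)
  obtain ⟨b, hbB, hbH, hbZ⟩ := exists_mem_notMem_of_card_lt hZH (hZ ▸ hHB ▸ hpp)
  -- If `Z ≤ A`, then `A ≤ H`, so `c` centralizes `A` and `C` as well as `b ∈ B`.
  have hZA : ¬ center G ≤ A := fun hZA => hbZ <| (hcent hT.rotate.reverse hA hC hcZ
    ((le_of_card_inf_eq (by rw [hA, ← hHA, sup_eq_left.mpr hZA])).trans hHc)
    (le_centralizer_singleton hc) hbB (hHc hbH)) ▸ one_mem _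
  have hZB : ¬ center G ≤ B := fun hZB => haZ <| (hcent hT.rotate hB hC hcZ
    ((le_of_card_inf_eq (by rw [hB, ← hHB, sup_eq_left.mpr hZB])).trans hHc)
    (le_centralizer_singleton hc) haA (hHc haH)) ▸ one_mem _
  have hHAB : H ⊓ (A ⊔ center G) ≠ H ⊓ (B ⊔ center G) := fun h => by
    have := sup_le_centralizer_of_mem haA (mem_inf.mp (h ▸ mem_inf.mpr ⟨haH, mem_sup_left haA⟩)).2
    exact hcZ <| (hcent hT hA hB haZ (le_sup_left.trans this) (le_sup_right.trans this) hc
      (le_centralizer_singleton haH hcH)) ▸ one_mem _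
  obtain ⟨a', ha', b', hb', z, hz, hab, rfl⟩ := exists_commute_mul_mul_eq hcomm hZH
    ((sup_eq_of_card_mul_prime hp inf_le_left inf_le_left (by rw [hHA, hH]; ring)
      (hHB.trans hHA.symm) hHAB).symm ▸ hcH)
  have hABZ : Disjoint A (B ⊔ center G) := by
    refine disjoint_def.mpr fun {g} (hgA : g ∈ A) hgBZ => ?_
    by_cases hgZ : g ∈ center G
    · exact disjoint_def.mp (disjoint_center_of_not_le (hZ ▸ hp) hZA) hgA hgZ
    have h := sup_le_centralizer_of_mem hgA hgBZ
    exact absurd ((hcent hT hA hB hgZ (le_sup_left.trans h) (le_sup_right.trans h) hc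
      (mul_mem (mul_mem (h (mem_sup_left ha')) (h (mem_sup_right hb')))
        (center_le_centralizer _ hz))) ▸ one_mem _) hcZ
  exact hcZ <| (hT.eq_one_of_mul_mul_mem hp hodd hexp hZ hcomm hC
    (exists_mul_mul_eq (disjoint_center_of_not_le (hZ ▸ hp) hZB) hABZ
      (by rw [hA, hB, hZ, hG]; ring)) ha' hb' hab hz hc) ▸ one_mem _

end IndepTriple

end

theorem stmt15_general {E : Type*} [Group E] (p : ℕ) (hp : p.Prime) (hodd : Odd p)
    (hE : Nat.card E = p ^ 5) (hes : IsExtraspecial p E)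
    (hexpE : ∀ g : E, g ^ p = 1)
    (A B C : Subgroup E)
    (hA : Nat.card A = p ^ 2) (hB : Nat.card B = p ^ 2) (hC : Nat.card C = p ^ 2)
    (hAB : A ⊓ B = ⊥)
    (htriple : ∀ g ∈ (A : Set E) * (B : Set E), g ∈ C → g = 1)
    (H : Subgroup E) (hHab : IsMulCommutative H) (hHcard : Nat.card H = p ^ 3)
    (hZH : Subgroup.center E ≤ H)
    (hHA : Nat.card ↥(H ⊓ (A ⊔ Subgroup.center E)) = p ^ 2)
    (hHB : Nat.card ↥(H ⊓ (B ⊔ Subgroup.center E)) = p ^ 2) :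
    H ⊓ (C ⊔ Subgroup.center E) = Subgroup.center E := by
  obtain ⟨hZcomm, -, hZ⟩ := hes
  have : Fact p.Prime := ⟨hp⟩
  have : Finite E := Nat.finite_of_card_ne_zero (by simp [hE, hp.ne_zero])
  have := IsPGroup.isMulCommutative_of_card_eq_prime_sq hA
  have := IsPGroup.isMulCommutative_of_card_eq_prime_sq hB
  have := IsPGroup.isMulCommutative_of_card_eq_prime_sq hC
  refine le_antisymm (fun x hx => ?_) (le_inf hZH le_sup_right)
  obtain ⟨c, hc, z₀, hz₀, rfl⟩ := mem_sup_of_normal_right.mp (mem_inf.mp hx).2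
  have hcH : c ∈ H := (mul_mem_cancel_right (hZH hz₀)).mp (mem_inf.mp hx).1
  exact mul_mem ((IndepTriple.of_mul_inter hAB htriple).inf_le_center hp hodd hexpE hE hZ
    hZcomm.ge hA hB hC hHcard hZH hHA hHB (mem_inf.mpr ⟨hcH, hc⟩)) hz₀

theorem stmt15 {E : Type*} [Group E] (p : ℕ) (hp : p.Prime) (hodd : Odd p)
    (hE : Nat.card E = p ^ 5) (hes : IsExtraspecial p E)
    (hexpE : ∀ g : E, g ^ p = 1)
    (A B C : Subgroup E)
    (hA : Nat.card A = p ^ 2) (hB : Nat.card B = p ^ 2) (hC : Nat.card C = p ^ 2)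
    (hAB : A ⊓ B = ⊥) (hAC : A ⊓ C = ⊥) (hBC : B ⊓ C = ⊥)
    (htriple : ∀ g ∈ (A : Set E) * (B : Set E), g ∈ C → g = 1)
    (H : Subgroup E) (hHab : IsMulCommutative H) (hHcard : Nat.card H = p ^ 3)
    (hZH : Subgroup.center E ≤ H)
    (hHA : Nat.card ↥(H ⊓ (A ⊔ Subgroup.center E)) = p ^ 2)
    (hHB : Nat.card ↥(H ⊓ (B ⊔ Subgroup.center E)) = p ^ 2) :
    H ⊓ (C ⊔ Subgroup.center E) = Subgroup.center E :=
  stmt15_general p hp hodd hE hes hexpE A B C hA hB hC hAB htriple H hHab hHcard hZH hHA hHB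
end
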